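/- arXiv:2506.17008 — 5 statements merged into one kernel-verified Lean document; each statement's English description precedes it below -/
import Mathlib

section
/- If an instance of Directed Steiner Linkage has a solution, then it has a solution K whose underlying undirected graph is a forest. -/
/-- There is a directed path from `a` to `b` using only arcs of `K`. -/
def dslReach {V : Type*} (K : Finset (V × V)) (a b : V) : Prop :=
  Relation.ReflTransGen (fun x y : V => (x, y) ∈ K) a b

/-- A solution to an instance of Directed Steiner Linkage: a set `K` of arcs of the
directed graph with arc relation `A`, of total weight at most `ℓ`, such that for some
bijective matching of the terminal multiset `S` (given as a list) with the terminal
multiset `T` (a permutation `T'` of `T`), every terminal of `S` reaches its partner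
by a directed path in `K`. -/
def DSLSolution {V : Type*} [DecidableEq V] (A : V → V → Prop) (w : V → V → ℚ≥0)
    (S T : List V) (ℓ : ℚ≥0) (K : Finset (V × V)) : Prop :=
  (∀ e ∈ K, A e.1 e.2) ∧ (∑ e ∈ K, w e.1 e.2) ≤ ℓ ∧
    ∃ T' : List V, T'.Perm T ∧ List.Forall₂ (dslReach K) S T'

namespace DSL6

variable {V : Type*} [DecidableEq V]

/-- In-degree (with multiplicity) of `x` in the arc multiset `F`. -/
def inF (F : Multiset (V × V)) (x : V) : ℕ := Multiset.countP (fun e => x = e.2) F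

/-- Out-degree (with multiplicity) of `x` in the arc multiset `F`. -/
def outF (F : Multiset (V × V)) (x : V) : ℕ := Multiset.countP (fun e => x = e.1) F

/-- The arc multiset `F` is a flow transporting the multiset `S` to the multiset `T`. -/
def Bal (F : Multiset (V × V)) (S T : Multiset V) : Prop :=
  ∀ x, (Multiset.count x S : ℤ) + inF F x = (Multiset.count x T : ℤ) + outF F x

/-- Reachability using arcs of the multiset `F`. -/
def reachF (F : Multiset (V × V)) (a b : V) : Prop :=
  Relation.ReflTransGen (fun x y : V => (x, y) ∈ F) a b

lemma exists_flow_of_reach {K : Finset (V × V)} {a b : V} (h : dslReach K a b) :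
    ∃ W : Multiset (V × V), (∀ e ∈ W, e ∈ K) ∧ Bal W {a} {b} := by
  induction h using Relation.ReflTransGen.head_induction_on with
  | refl => exact ⟨0, by simp, fun x => by simp [inF, outF]⟩
  | head hac _ ih =>
    rename_i a c _
    obtain ⟨W, hWK, hWbal⟩ := ih
    refine ⟨(a, c) ::ₘ W, ?_, ?_⟩
    · intro e he
      rcases Multiset.mem_cons.1 he with rfl | he
      · exact hac
      · exact hWK e he
    · intro x
      have h1 := hWbal x
      simp only [inF, outF, Multiset.countP_cons, Multiset.count_singleton] at h1 ⊢
      split_ifs at h1 ⊢ <;> simp_all <;> omega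

lemma Bal.add {F G : Multiset (V × V)} {S S' T T' : Multiset V}
    (h1 : Bal F S T) (h2 : Bal G S' T') : Bal (F + G) (S + S') (T + T') := by
  intro x
  have := h1 x; have := h2 x
  simp only [inF, outF, Multiset.countP_add, Multiset.count_add] at *
  push_cast at *
  omega

lemma exists_flow_of_forall₂ {K : Finset (V × V)} {S T' : List V}
    (h : List.Forall₂ (dslReach K) S T') :
    ∃ F : Multiset (V × V), (∀ e ∈ F, e ∈ K) ∧ Bal F ↑S ↑T' := by
  induction h with
  | nil => exact ⟨0, by simp, fun x => by simp [inF, outF]⟩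
  | cons hab h ih =>
    rename_i a b S₁ T₁
    obtain ⟨F, hFK, hFbal⟩ := ih
    obtain ⟨W, hWK, hWbal⟩ := exists_flow_of_reach hab
    refine ⟨W + F, ?_, ?_⟩
    · intro e he
      rcases Multiset.mem_add.1 he with he | he
      · exact hWK e he
      · exact hFK e he
    · have := hWbal.add hFbal
      simpa [← Multiset.cons_coe, ← Multiset.singleton_add] using this

lemma rel_of_bal : ∀ (n : ℕ) (F : Multiset (V × V)) (S T : Multiset V),
    Multiset.card F + Multiset.card S = n → Bal F S T →
    Multiset.card S = Multiset.card T → Multiset.Rel (reachF F) S T := by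
  intro n
  induction n using Nat.strong_induction_on with
  | _ n ih =>
    intro F S T hn hbal hcard
    rcases Multiset.empty_or_exists_mem S with rfl | ⟨s, hs⟩
    · have : T = 0 := by
        rw [← Multiset.card_eq_zero, ← hcard]; simp
      simp [this]
    · obtain ⟨S₁, rfl⟩ := Multiset.exists_cons_of_mem hs
      by_cases hsT : s ∈ T
      · obtain ⟨T₁, rfl⟩ := Multiset.exists_cons_of_mem hsT
        refine Multiset.Rel.cons Relation.ReflTransGen.refl ?_
        have hcc : Multiset.card (s ::ₘ S₁) = Multiset.card S₁ + 1 := Multiset.card_cons s S₁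
        refine ih (Multiset.card F + Multiset.card S₁) (by omega) F S₁ T₁ rfl ?_ ?_
        · intro x
          have h1 := hbal x
          simp only [Multiset.count_cons] at h1
          split_ifs at h1 <;> push_cast at h1 ⊢ <;> omega
        · have := hcard; simp only [Multiset.card_cons] at this; omega
      · have h1 := hbal s
        have hTs : Multiset.count s T = 0 := Multiset.count_eq_zero.2 hsT
        have hSs : 0 < Multiset.count s (s ::ₘ S₁) := Multiset.count_pos.2 (Multiset.mem_cons_self s S₁)
        have hout : 0 < outF F s := by
          rw [hTs] at h1; push_cast at h1; omega
        have hex : ∃ e ∈ F, s = e.1 := by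
          by_contra hcon
          push_neg at hcon
          have : outF F s = 0 := Multiset.countP_eq_zero.2 hcon
          omega
        obtain ⟨e, heF, he1⟩ := hex
        obtain ⟨e1, e2⟩ := e
        simp only at he1
        subst he1
        have hF : F = (s, e2) ::ₘ F.erase (s, e2) := (Multiset.cons_erase heF).symm
        have hbal' : Bal (F.erase (s, e2)) (e2 ::ₘ S₁) T := by
          intro x
          have h2 := hbal x
          rw [hF] at h2
          simp only [inF, outF, Multiset.countP_cons, Multiset.count_cons] at h2 ⊢
          split_ifs at h2 ⊢ <;> omega
        have hcard' : Multiset.card (e2 ::ₘ S₁) = Multiset.card T := by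
          simp only [Multiset.card_cons] at hcard ⊢; omega
        have hmeas : Multiset.card (F.erase (s, e2)) + Multiset.card (e2 ::ₘ S₁) < n := by
          have h3 : Multiset.card (F.erase (s, e2)) = Multiset.card F - 1 :=
            Multiset.card_erase_of_mem heF
          have h4 : 0 < Multiset.card F := Multiset.card_pos.2 (by
            intro h0; rw [h0] at heF; simp at heF)
          simp only [Multiset.card_cons] at hn ⊢
          omega
        have hrel := ih _ hmeas (F.erase (s, e2)) (e2 ::ₘ S₁) T rfl hbal' hcard'
        rw [Multiset.rel_cons_left] at hrel
        obtain ⟨t, T₂, hyt, hrel₂, rfl⟩ := hrel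
        have hmono : ∀ a b : V, reachF (F.erase (s, e2)) a b → reachF F a b := fun a b h =>
          Relation.ReflTransGen.mono (fun x y hxy => Multiset.mem_of_mem_erase hxy) _ _ h
        refine Multiset.Rel.cons ?_ (hrel₂.mono fun a _ b _ h => hmono a b h)
        exact Relation.ReflTransGen.head heF (hmono _ _ hyt)

lemma forall₂_of_rel {r : V → V → Prop} : ∀ (S : List V) (M : Multiset V),
    Multiset.Rel r ↑S M → ∃ T'' : List V, (↑T'' : Multiset V) = M ∧ List.Forall₂ r S T'' := by
  intro S
  induction S with
  | nil =>
    intro M h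
    rw [Multiset.coe_nil] at h
    have : M = 0 := Multiset.rel_zero_left.1 h
    exact ⟨[], by simp [this], List.Forall₂.nil⟩
  | cons s S₁ ihS =>
    intro M h
    rw [← Multiset.cons_coe, Multiset.rel_cons_left] at h
    obtain ⟨b, M', hsb, hrel, rfl⟩ := h
    obtain ⟨T₁, hT₁, hf⟩ := ihS M' hrel
    exact ⟨b :: T₁, by rw [← Multiset.cons_coe, hT₁], List.Forall₂.cons hsb hf⟩

lemma sol_of_flow {K : Finset (V × V)} {S T' : List V} {F : Multiset (V × V)}
    (hFK : ∀ e ∈ F, e ∈ K) (hbal : Bal F ↑S ↑T') (hcard : S.length = T'.length) :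
    ∃ T'' : List V, T''.Perm T' ∧ List.Forall₂ (dslReach K) S T'' := by
  have hrel := rel_of_bal (Multiset.card F + Multiset.card (↑S : Multiset V)) F ↑S ↑T' rfl hbal
    (by simpa using hcard)
  obtain ⟨T'', hTeq, hf⟩ := forall₂_of_rel S _ hrel
  refine ⟨T'', Multiset.coe_eq_coe.1 hTeq, ?_⟩
  exact hf.imp fun {a b} h => Relation.ReflTransGen.mono (fun x y hxy => hFK _ hxy) _ _ h

lemma sum_map_lt {α : Type*} {s : Multiset α} (h0 : s ≠ 0) {f g : α → ℕ}
    (h : ∀ a ∈ s, g a < f a) : (s.map g).sum < (s.map f).sum := by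
  induction s using Multiset.induction_on with
  | empty => exact absurd rfl h0
  | cons a s ihs =>
    by_cases hs : s = 0
    · subst hs; simpa using h a (Multiset.mem_cons_self a 0)
    · simp only [Multiset.map_cons, Multiset.sum_cons]
      exact Nat.add_lt_add (h a (Multiset.mem_cons_self a s))
        (ihs hs fun a ha => h a (Multiset.mem_cons_of_mem ha))

lemma outF_eq_count (F : Multiset (V × V)) (x : V) :
    outF F x = Multiset.count x (F.map Prod.fst) := by
  rw [Multiset.count_map, outF, Multiset.countP_eq_card_filter]

lemma inF_eq_count (F : Multiset (V × V)) (x : V) :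
    inF F x = Multiset.count x (F.map Prod.snd) := by
  rw [Multiset.count_map, inF, Multiset.countP_eq_card_filter]

/-- The circulation lemma: given a closed cycle structure `ZM` in the underlying
undirected graph of `K`, any flow supported in `K` can be modified (preserving balance
and support in `K`) so as to avoid some arc of `K`. -/
lemma circ {K : Finset (V × V)} {ZM : Multiset (V × V)}
    (hZne : ZM ≠ 0)
    (hfst : (ZM.map Prod.fst).Nodup)
    (hcnt : ∀ x, outF ZM x = inF ZM x)
    (hswap : ∀ p ∈ ZM, p.swap ∉ ZM)
    (hBne : ∃ p ∈ ZM, p.swap ∈ K)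
    (hFwK : ∀ p ∈ ZM, p.swap ∉ K → p ∈ K) :
    ∀ (n : ℕ) (F : Multiset (V × V)) (SM TM : Multiset V),
      ((ZM.filter (fun p => p.swap ∈ K)).map (fun p => Multiset.count p.swap F)).sum = n →
      Bal F SM TM → (∀ a ∈ F, a ∈ K) →
      ∃ e ∈ K, ∃ F' : Multiset (V × V), Bal F' SM TM ∧ (∀ a ∈ F', a ∈ K) ∧ e ∉ F' := by
  have hZnodup : ZM.Nodup := Multiset.Nodup.of_map Prod.fst hfst
  set B : Multiset (V × V) := ZM.filter (fun p => p.swap ∈ K) with hB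
  set Fw : Multiset (V × V) := ZM.filter (fun p => ¬ p.swap ∈ K) with hFw
  set backs : Multiset (V × V) := B.map Prod.swap with hbacks
  have hBnodup : B.Nodup := hZnodup.filter _
  have hbacksnodup : backs.Nodup := hBnodup.map Prod.swap_injective
  have hBne' : B ≠ 0 := by
    obtain ⟨p, hp, hpK⟩ := hBne
    intro h0
    have : p ∈ B := Multiset.mem_filter.2 ⟨hp, hpK⟩
    rw [h0] at this; simp at this
  have hbacksK : ∀ q ∈ backs, q ∈ K := by
    intro q hq
    obtain ⟨p, hp, rfl⟩ := Multiset.mem_map.1 hq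
    exact (Multiset.mem_filter.1 hp).2
  have hFwK' : ∀ q ∈ Fw, q ∈ K := by
    intro q hq
    obtain ⟨hqZ, hqn⟩ := Multiset.mem_filter.1 hq
    exact hFwK q hqZ hqn
  have hdisj : ∀ q ∈ backs, q ∉ Fw := by
    intro q hq hqFw
    obtain ⟨p, hp, rfl⟩ := Multiset.mem_map.1 hq
    have hpZ : p ∈ ZM := (Multiset.mem_filter.1 hp).1
    have : p.swap ∈ ZM := (Multiset.mem_filter.1 hqFw).1
    exact hswap p hpZ this
  intro n
  induction n using Nat.strong_induction_on with
  | _ n ih =>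
    intro F SM TM hmeas hbal hFK
    by_cases hall : ∀ e ∈ K, e ∈ F
    · -- push a unit of circulation around the cycle
      have hle : backs ≤ F := by
        rw [Multiset.le_iff_count]
        intro a
        by_cases ha : a ∈ backs
        · calc Multiset.count a backs ≤ 1 := Multiset.nodup_iff_count_le_one.1 hbacksnodup a
            _ ≤ Multiset.count a F := Multiset.count_pos.2 (hall a (hbacksK a ha))
        · simp [Multiset.count_eq_zero.2 ha]
      set F' : Multiset (V × V) := (F - backs) + Fw with hF'
      have hcountP : ∀ (p : V × V → Prop) [DecidablePred p],
          (Multiset.countP p F' : ℤ) =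
            Multiset.countP p F - Multiset.countP p backs + Multiset.countP p Fw := by
        intro p _
        rw [hF', Multiset.countP_add, Multiset.countP_sub (p := p) hle]
        have := Multiset.countP_le_of_le p hle
        push_cast [Nat.cast_sub this]
        ring
      have hbal' : Bal F' SM TM := by
        intro x
        have h1 := hbal x
        have hin := hcountP (fun e => x = e.2)
        have hout := hcountP (fun e => x = e.1)
        have hsplit1 : Multiset.countP (fun e : V × V => x = e.1) ZM =
            Multiset.countP (fun e : V × V => x = e.1) B +
            Multiset.countP (fun e : V × V => x = e.1) Fw :=
          Multiset.countP_eq_countP_filter_add ZM _ _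
        have hsplit2 : Multiset.countP (fun e : V × V => x = e.2) ZM =
            Multiset.countP (fun e : V × V => x = e.2) B +
            Multiset.countP (fun e : V × V => x = e.2) Fw :=
          Multiset.countP_eq_countP_filter_add ZM _ _
        have hb1 : Multiset.countP (fun e : V × V => x = e.2) backs =
            Multiset.countP (fun e : V × V => x = e.1) B := by
          rw [hbacks, Multiset.countP_map]
          simp [Multiset.countP_eq_card_filter, Prod.snd_swap]
        have hb2 : Multiset.countP (fun e : V × V => x = e.1) backs =
            Multiset.countP (fun e : V × V => x = e.2) B := by
          rw [hbacks, Multiset.countP_map]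
          simp [Multiset.countP_eq_card_filter, Prod.fst_swap]
        have hc := hcnt x
        simp only [inF, outF] at h1 hc ⊢
        rw [hb1] at hin
        rw [hb2] at hout
        omega
      have hFK' : ∀ a ∈ F', a ∈ K := by
        intro a ha
        rcases Multiset.mem_add.1 ha with ha | ha
        · exact hFK a (Multiset.mem_of_le (Multiset.sub_le_self F backs) ha)
        · exact hFwK' a ha
      have hmeas' : ((B.map (fun p => Multiset.count p.swap F')).sum) < n := by
        rw [← hmeas]
        refine sum_map_lt hBne' ?_
        intro p hp
        have hpsb : p.swap ∈ backs := Multiset.mem_map_of_mem Prod.swap hp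
        have h1 : Multiset.count p.swap backs = 1 :=
          le_antisymm (Multiset.nodup_iff_count_le_one.1 hbacksnodup _)
            (Multiset.count_pos.2 hpsb)
        have h2 : Multiset.count p.swap Fw = 0 :=
          Multiset.count_eq_zero.2 (hdisj p.swap hpsb)
        have h3 : 0 < Multiset.count p.swap F :=
          Multiset.count_pos.2 (hall _ ((Multiset.mem_filter.1 hp).2))
        rw [hF', Multiset.count_add, Multiset.count_sub, h1, h2]
        omega
      exact ih _ hmeas' F' SM TM rfl hbal' hFK'
    · push_neg at hall
      obtain ⟨e, heK, heF⟩ := hall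
      exact ⟨e, heK, F, hbal, hFK, heF⟩

lemma cycle_structure {K : Finset (V × V)} {v : V}
    {c : (SimpleGraph.fromRel (fun a b : V => (a, b) ∈ K)).Walk v v} (hc : c.IsCycle) :
    ∃ ZM : Multiset (V × V), ZM ≠ 0 ∧ (ZM.map Prod.fst).Nodup ∧ (ZM.map Prod.snd).Nodup ∧
      (∀ x, outF ZM x = inF ZM x) ∧ (∀ p ∈ ZM, p.swap ∉ ZM) ∧
      (∀ p ∈ ZM, p ∈ K ∨ p.swap ∈ K) := by
  classical
  have h3len := hc.three_le_length
  have hsupp : c.support = v :: c.support.tail := c.support_eq_cons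
  have hlsupp : c.support.length = c.length + 1 := SimpleGraph.Walk.length_support c
  have htne : c.support.tail ≠ [] := by
    intro h0
    have h2 : c.support.length = 1 := by rw [hsupp, h0]; rfl
    omega
  have hgl : (c.support.tail).getLast htne = v := by
    have h1 := SimpleGraph.Walk.getLast_support c
    have h2 : c.support.getLast c.support_ne_nil = (c.support.tail).getLast htne := by
      rw [List.getLast_congr _ _ hsupp]
      exact List.getLast_cons htne
    rw [← h2, h1]
  have htnodup : (c.support.tail).Nodup := hc.support_nodup
  have hteq : (c.support.tail).dropLast ++ [v] = c.support.tail := by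
    have h1 := List.dropLast_append_getLast htne
    rw [hgl] at h1
    exact h1
  have hvnd : v ∉ (c.support.tail).dropLast := by
    have h1 := htnodup
    rw [← hteq, List.nodup_append] at h1
    exact fun hv => h1.2.2 v hv v (by simp) rfl
  have hdnd : (c.support.tail).dropLast.Nodup := by
    have h1 := htnodup
    rw [← hteq, List.nodup_append] at h1
    exact h1.1
  have hdl : c.support.dropLast = v :: (c.support.tail).dropLast := by
    conv_lhs => rw [hsupp]
    exact List.dropLast_cons_of_ne_nil htne
  have hZfst : (c.darts.map SimpleGraph.Dart.toProd).map Prod.fst = c.support.dropLast := by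
    rw [List.map_map]
    have h1 := SimpleGraph.Walk.map_fst_darts c
    exact h1
  have hZsnd : (c.darts.map SimpleGraph.Dart.toProd).map Prod.snd = c.support.tail := by
    rw [List.map_map]
    have h1 := SimpleGraph.Walk.map_snd_darts c
    exact h1
  refine ⟨↑(c.darts.map SimpleGraph.Dart.toProd), ?_, ?_, ?_, ?_, ?_, ?_⟩
  · intro h0
    have h1 : c.darts.map SimpleGraph.Dart.toProd = [] := (Multiset.coe_eq_zero _).1 h0
    have hd : c.darts.length = 0 := by simpa using congrArg List.length h1
    rw [SimpleGraph.Walk.length_darts] at hd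
    omega
  · rw [Multiset.map_coe, Multiset.coe_nodup, hZfst, hdl]
    exact List.nodup_cons.2 ⟨hvnd, hdnd⟩
  · rw [Multiset.map_coe, Multiset.coe_nodup, hZsnd]
    exact htnodup
  · intro x
    rw [outF_eq_count, inF_eq_count, Multiset.map_coe, Multiset.map_coe, Multiset.coe_count,
      Multiset.coe_count, hZfst, hZsnd, hdl]
    conv_rhs => rw [← hteq]
    simp [List.count_cons, List.count_append]
  · intro p hp hps
    rw [Multiset.mem_coe, List.mem_map] at hp hps
    obtain ⟨d₁, hd₁, rfl⟩ := hp
    obtain ⟨d₂, hd₂, hd₂e⟩ := hps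
    have h12 : d₂ = d₁.symm := by
      apply SimpleGraph.Dart.ext
      rw [hd₂e]
      rfl
    have hne : d₁ ≠ d₂ := by
      rw [h12]
      exact (SimpleGraph.Dart.symm_ne d₁).symm
    have hedge : d₁.edge = d₂.edge := by
      rw [h12, SimpleGraph.Dart.edge_symm]
    have hnodup : (c.darts.map SimpleGraph.Dart.edge).Nodup :=
      hc.isCircuit.isTrail.edges_nodup
    exact hne (List.inj_on_of_nodup_map hnodup hd₁ hd₂ hedge)
  · intro p hp
    rw [Multiset.mem_coe, List.mem_map] at hp
    obtain ⟨d, hd, rfl⟩ := hp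
    have hadj' := d.adj
    rw [SimpleGraph.fromRel_adj] at hadj'
    rcases hadj'.2 with h | h
    · left
      simpa using h
    · right
      exact h

end DSL6

open DSL6 in
/-- If a solution exists and the underlying undirected graph has a cycle, then some
arc can be removed keeping a solution. -/
lemma dsl_exists_removable {V : Type*} [DecidableEq V] {K : Finset (V × V)}
    (hcyc : ¬ (SimpleGraph.fromRel (fun a b : V => (a, b) ∈ K)).IsAcyclic)
    {S T' : List V} (hsol : List.Forall₂ (dslReach K) S T') :
    ∃ e ∈ K, ∃ T'' : List V, T''.Perm T' ∧ List.Forall₂ (dslReach (K.erase e)) S T'' := by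
  classical
  simp only [SimpleGraph.IsAcyclic] at hcyc
  push_neg at hcyc
  obtain ⟨v, c, hc⟩ := hcyc
  obtain ⟨ZM, hZne, hfstN, hsndN, hcntM, hswapM, hadjM⟩ := DSL6.cycle_structure hc
  have hFwK : ∀ p ∈ ZM, p.swap ∉ K → p ∈ K := by
    intro p hp hpn
    rcases hadjM p hp with h | h
    · exact h
    · exact absurd h hpn
  suffices hcore : ∃ ZM' : Multiset (V × V), ZM' ≠ 0 ∧ (ZM'.map Prod.fst).Nodup ∧
      (∀ x, DSL6.outF ZM' x = DSL6.inF ZM' x) ∧ (∀ p ∈ ZM', p.swap ∉ ZM') ∧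
      (∃ p ∈ ZM', p.swap ∈ K) ∧ (∀ p ∈ ZM', p.swap ∉ K → p ∈ K) by
    obtain ⟨ZM', h1, h2, h3, h4, h5, h6⟩ := hcore
    obtain ⟨F, hFK, hFbal⟩ := DSL6.exists_flow_of_forall₂ hsol
    obtain ⟨e, heK, F', hbal', hFK', heF'⟩ :=
      DSL6.circ h1 h2 h3 h4 h5 h6 _ F ↑S ↑T' rfl hFbal hFK
    have hFK'' : ∀ a ∈ F', a ∈ K.erase e := fun a ha =>
      Finset.mem_erase.2 ⟨by rintro rfl; exact heF' ha, hFK' a ha⟩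
    obtain ⟨T'', hperm, hf⟩ := DSL6.sol_of_flow hFK'' hbal' hsol.length_eq
    exact ⟨e, heK, T'', hperm, hf⟩
  by_cases hBc : ∃ p ∈ ZM, p.swap ∈ K
  · exact ⟨ZM, hZne, hfstN, hcntM, hswapM, hBc, hFwK⟩
  · push_neg at hBc
    have hallK : ∀ p ∈ ZM, p ∈ K := by
      intro p hp
      rcases hadjM p hp with h | h
      · exact h
      · exact absurd h (hBc p hp)
    refine ⟨ZM.map Prod.swap, ?_, ?_, ?_, ?_, ?_, ?_⟩
    · simp only [ne_eq, Multiset.map_eq_zero]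
      exact hZne
    · have h1 : (ZM.map Prod.swap).map Prod.fst = ZM.map Prod.snd := by
        rw [Multiset.map_map]
        rfl
      rw [h1]
      exact hsndN
    · intro x
      have h1 : DSL6.outF (ZM.map Prod.swap) x = DSL6.inF ZM x := by
        rw [DSL6.outF, Multiset.countP_map, DSL6.inF, Multiset.countP_eq_card_filter]
        simp [Prod.fst_swap]
      have h2 : DSL6.inF (ZM.map Prod.swap) x = DSL6.outF ZM x := by
        rw [DSL6.inF, Multiset.countP_map, DSL6.outF, Multiset.countP_eq_card_filter]
        simp [Prod.snd_swap]
      rw [h1, h2, hcntM]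
    · intro q hq hqs
      obtain ⟨p, hp, rfl⟩ := Multiset.mem_map.1 hq
      rw [Prod.swap_swap] at hqs
      obtain ⟨p', hp', hp'e⟩ := Multiset.mem_map.1 hqs
      exact hswapM p' hp' (by rw [hp'e]; exact hp)
    · obtain ⟨p, hp⟩ := Multiset.exists_mem_of_ne_zero hZne
      exact ⟨p.swap, Multiset.mem_map_of_mem _ hp, by rw [Prod.swap_swap]; exact hallK p hp⟩
    · intro q hq hqn
      obtain ⟨p, hp, rfl⟩ := Multiset.mem_map.1 hq
      rw [Prod.swap_swap] at hqn
      exact absurd (hallK p hp) hqn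
/-- If an instance of Directed Steiner Linkage has a solution, then it has a solution
whose underlying undirected graph is a forest. -/
theorem stmt_6 {V : Type*} [DecidableEq V] (A : V → V → Prop) (w : V → V → ℚ≥0)
    (S T : List V) (hlen : S.length = T.length) (ℓ : ℚ≥0)
    (hsol : ∃ K : Finset (V × V), DSLSolution A w S T ℓ K) :
    ∃ K : Finset (V × V), DSLSolution A w S T ℓ K ∧
      (SimpleGraph.fromRel (fun a b : V => (a, b) ∈ K)).IsAcyclic := by
  classical
  obtain ⟨K₀, hA, hw, hsol₀⟩ := hsol
  suffices h : ∀ (n : ℕ) (K : Finset (V × V)), K ⊆ K₀ → K.card = n →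
      (∃ T' : List V, T'.Perm T ∧ List.Forall₂ (dslReach K) S T') →
      ∃ K' : Finset (V × V), DSLSolution A w S T ℓ K' ∧
        (SimpleGraph.fromRel (fun a b : V => (a, b) ∈ K')).IsAcyclic by
    exact h K₀.card K₀ (Finset.Subset.refl K₀) rfl hsol₀
  intro n
  induction n using Nat.strong_induction_on with
  | _ n ih =>
    intro K hKsub hKcard hsolK
    by_cases hacyc : (SimpleGraph.fromRel (fun a b : V => (a, b) ∈ K)).IsAcyclic
    · refine ⟨K, ⟨fun e he => hA e (hKsub he), le_trans ?_ hw, hsolK⟩, hacyc⟩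
      exact Finset.sum_le_sum_of_subset hKsub
    · obtain ⟨T', hperm, hf⟩ := hsolK
      obtain ⟨e, heK, T'', hperm', hf'⟩ := dsl_exists_removable hacyc hf
      have hlt : (K.erase e).card < n := by
        rw [← hKcard]
        exact Finset.card_erase_lt_of_mem heK
      exact ih _ hlt (K.erase e) (fun a ha => hKsub (Finset.mem_of_mem_erase ha)) rfl
        ⟨T'', hperm'.trans hperm, hf'⟩
end

section
/- An instance (G, s, t, k, ℓ) of Fault-Tolerant Path is a yes-instance if and only if there exist k+1 directed s-t-paths P₁,…,P_{k+1} in G such that any two distinct paths share only safe edges and the total weight of the union of all edges used by the paths is at most ℓ. -/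
/-- The (directed) edges of a walk given by its list of visited vertices. -/
def pathEdges {V : Type*} (l : List V) : List (V × V) := l.zip l.tail

/-- A solution to the Fault-Tolerant Path instance
`(G = (V, Safe ∪ Vuln), w, s, t, k, ℓ)`: a set `K` of edges of total weight at most
`ℓ` such that for every set `F` of at most `k` vulnerable edges of `K`, the subgraph
on `K \ F` still contains a directed `s`-`t`-path. -/
def FTPSolution {V : Type*} [DecidableEq V] (Safe Vuln : Finset (V × V))
    (w : V × V → ℕ) (s t : V) (k ℓ : ℕ) (K : Finset (V × V)) : Prop :=
  K ⊆ Safe ∪ Vuln ∧ (∑ e ∈ K, w e) ≤ ℓ ∧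
    ∀ F : Finset (V × V), F ⊆ K ∩ Vuln → F.card ≤ k →
      Relation.ReflTransGen (fun a b : V => (a, b) ∈ K \ F) s t

open Finset List Relation

set_option linter.unusedSectionVars false
namespace FTPaux

variable {V : Type*} [DecidableEq V]

theorem pathEdges_cons_cons (a b : V) (l : List V) :
    pathEdges (a :: b :: l) = (a, b) :: pathEdges (b :: l) := rfl

theorem mem_pathEdges {l : List V} {e : V × V} (h : e ∈ pathEdges l) :
    e.1 ∈ l ∧ e.2 ∈ l := by
  have h1 := (List.of_mem_zip h).1
  have h2 := (List.of_mem_zip h).2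
  exact ⟨h1, List.mem_of_mem_tail h2⟩

theorem reflTransGen_of_path {r : V → V → Prop} :
    ∀ (l : List V) (s t : V), l.head? = some s → l.getLast? = some t →
      (∀ e ∈ pathEdges l, r e.1 e.2) → ReflTransGen r s t := by
  intro l
  induction l with
  | nil => intro s t h; simp at h
  | cons a l ih =>
    intro s t hh hl he
    have hh' : a = s := by simpa using hh
    subst hh' 
    cases l with
    | nil =>
      simp only [List.getLast?_singleton, Option.some.injEq] at hl
      subst hl; exact ReflTransGen.refl
    | cons b m =>
      have hr : r a b := he (a, b) (by simp [pathEdges_cons_cons])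
      refine ReflTransGen.head hr (ih b t rfl ?_ ?_)
      · rwa [List.getLast?_cons_cons] at hl
      · intro e hee; exact he e (by simp [pathEdges_cons_cons, hee])

theorem chain_pathEdges {r : V → V → Prop} :
    ∀ (l : List V) (a : V), Chain r a l → ∀ e ∈ pathEdges (a :: l), r e.1 e.2 := by
  intro l
  induction l with
  | nil => intro a _ e he; simp [pathEdges] at he
  | cons b m ih =>
    intro a hc e he
    rw [List.Chain, List.chain_cons] at hc
    rw [pathEdges_cons_cons, List.mem_cons] at he
    rcases he with rfl | he
    · exact hc.1
    · exact ih b hc.2 e he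

theorem crossing {r : V → V → Prop} {Q : V → Prop} {x y : V} (h : ReflTransGen r x y)
    (hx : Q x) (hy : ¬ Q y) : ∃ u v, Q u ∧ ¬ Q v ∧ r u v := by
  induction h with
  | refl => exact absurd hx hy
  | @tail b c hbc hrel ih =>
    by_cases hb : Q b
    · exact ⟨b, c, hb, hy, hrel⟩
    · exact ih hb

theorem exists_nodup_chain_aux {r : V → V → Prop} :
    ∀ (n : ℕ) (l : List V) (a : V), l.length ≤ n → Chain r a l →
      ∃ m, Chain r a m ∧
        (a :: m).getLast? = (a :: l).getLast? ∧
        (a :: m).Nodup ∧ ∀ x ∈ a :: m, x ∈ a :: l := by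
  intro n
  induction n with
  | zero =>
    intro l a hlen _
    rw [Nat.le_zero, List.length_eq_zero_iff] at hlen
    subst hlen
    exact ⟨[], Chain.nil, rfl, by simp, by simp⟩
  | succ n ih =>
    intro l a hlen hc
    by_cases ha : a ∈ l
    · obtain ⟨l₁, l₂, rfl⟩ := List.append_of_mem ha
      have hc2 : Chain r a l₂ := (List.isChain_cons_split.mp hc).2
      have hlen2 : l₂.length ≤ n := by
        have := hlen; simp [List.length_append] at this; omega
      obtain ⟨m, hm1, hm2, hm3, hm4⟩ := ih l₂ a hlen2 hc2
      refine ⟨m, hm1, ?_, hm3, ?_⟩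
      · rw [hm2]
        have h5 : (a :: (l₁ ++ a :: l₂)) = (a :: l₁) ++ a :: l₂ := by simp
        rw [h5, List.getLast?_append_cons]
      · intro x hx
        have := hm4 x hx
        rcases List.mem_cons.mp this with rfl | h
        · exact List.mem_cons_self
        · exact List.mem_cons_of_mem _ (by simp [h])
    · cases l with
      | nil => exact ⟨[], Chain.nil, rfl, by simp, by simp⟩
      | cons c l' =>
        rw [List.Chain, List.chain_cons] at hc
        have hlen' : l'.length ≤ n := by simp at hlen; omega
        obtain ⟨m', hm1, hm2, hm3, hm4⟩ := ih l' c hlen' hc.2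
        refine ⟨c :: m', List.chain_cons.mpr ⟨hc.1, hm1⟩, ?_, ?_, ?_⟩
        · rw [List.getLast?_cons_cons, hm2, List.getLast?_cons_cons]
        · refine List.nodup_cons.mpr ⟨?_, hm3⟩
          intro hmem
          exact ha (by simpa using hm4 a hmem)
        · intro x hx
          rcases List.mem_cons.mp hx with rfl | h
          · exact List.mem_cons_self
          · exact List.mem_cons_of_mem _ (by simpa using hm4 x h)

section Flows

variable (K : Finset (V × V))

/-- Divergence of `f` at `v` w.r.t. edge set `K`. -/
def fdiv (f : V × V → ℤ) (v : V) : ℤ :=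
  (∑ e ∈ K.filter (fun e => e.1 = v), f e) - ∑ e ∈ K.filter (fun e => e.2 = v), f e

theorem fdiv_sum (f : V × V → ℤ) (A : Finset V) :
    ∑ v ∈ A, fdiv K f v
      = (∑ e ∈ K.filter (fun e => e.1 ∈ A ∧ e.2 ∉ A), f e)
        - ∑ e ∈ K.filter (fun e => e.2 ∈ A ∧ e.1 ∉ A), f e := by
  unfold fdiv
  rw [Finset.sum_sub_distrib]
  rw [Finset.sum_fiberwise_eq_sum_filter K A Prod.fst f,
    Finset.sum_fiberwise_eq_sum_filter K A Prod.snd f]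
  rw [← Finset.sum_filter_add_sum_filter_not (K.filter (fun e => e.1 ∈ A)) (fun e => e.2 ∈ A) f]
  rw [← Finset.sum_filter_add_sum_filter_not (K.filter (fun e => e.2 ∈ A)) (fun e => e.1 ∈ A) f]
  rw [Finset.filter_filter, Finset.filter_filter, Finset.filter_filter, Finset.filter_filter]
  have h1 : (K.filter fun e => e.1 ∈ A ∧ e.2 ∈ A) = (K.filter fun e => e.2 ∈ A ∧ e.1 ∈ A) := by
    apply Finset.filter_congr; intro e _; simp [and_comm]
  rw [h1]
  ring

theorem fdiv_add (f g : V × V → ℤ) (v : V) :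
    fdiv K (fun e => f e + g e) v = fdiv K f v + fdiv K g v := by
  unfold fdiv
  rw [Finset.sum_add_distrib, Finset.sum_add_distrib]
  ring

theorem fdiv_sub (f g : V × V → ℤ) (v : V) :
    fdiv K (fun e => f e - g e) v = fdiv K f v - fdiv K g v := by
  unfold fdiv
  rw [Finset.sum_sub_distrib, Finset.sum_sub_distrib]
  ring

theorem fdiv_single {e₀ : V × V} (he : e₀ ∈ K) (d : ℤ) (v : V) :
    fdiv K (fun e => if e = e₀ then d else 0) v
      = (if v = e₀.1 then d else 0) - (if v = e₀.2 then d else 0) := by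
  unfold fdiv
  rw [Finset.sum_ite_eq' (K.filter (fun e => e.1 = v)) e₀ (fun _ => d),
    Finset.sum_ite_eq' (K.filter (fun e => e.2 = v)) e₀ (fun _ => d)]
  simp only [Finset.mem_filter, he, true_and]
  congr 1 <;> simp [eq_comm]

theorem fdiv_update (f : V × V → ℤ) {e₀ : V × V} (he : e₀ ∈ K) (d : ℤ) (v : V) :
    fdiv K (fun e => f e + (if e = e₀ then d else 0)) v
      = fdiv K f v + (if v = e₀.1 then d else 0) - (if v = e₀.2 then d else 0) := by
  rw [fdiv_add, fdiv_single K he]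
  ring

theorem fdiv_zero (v : V) : fdiv K (fun _ => 0) v = 0 := by
  simp [fdiv]

end Flows
section Main

variable (Safe Vuln K : Finset (V × V)) (s t : V) (k : ℕ)

/-- Capacity: vulnerable edges get 1, others k+1. -/
def cap : V × V → ℤ := fun e => if e ∈ Vuln then 1 else (k + 1 : ℤ)

theorem cap_one_le (e : V × V) : (1 : ℤ) ≤ cap Vuln k e := by
  unfold cap
  split
  · exact le_refl _
  · have : (0:ℤ) ≤ (k:ℤ) := Int.natCast_nonneg k
    linarith

def Kverts : Finset V := K.image Prod.fst ∪ K.image Prod.snd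

theorem fst_mem_Kverts {e : V × V} (he : e ∈ K) : e.1 ∈ Kverts K := by
  simp only [Kverts, Finset.mem_union, Finset.mem_image]
  exact Or.inl ⟨e, he, rfl⟩

theorem snd_mem_Kverts {e : V × V} (he : e ∈ K) : e.2 ∈ Kverts K := by
  simp only [Kverts, Finset.mem_union, Finset.mem_image]
  exact Or.inr ⟨e, he, rfl⟩

def Bounds (f : V × V → ℤ) : Prop :=
  (∀ e, 0 ≤ f e) ∧ (∀ e ∉ K, f e = 0) ∧ ∀ e, f e ≤ cap Vuln k e

/-- Residual relation. -/
def Rsd (f : V × V → ℤ) (u v : V) : Prop :=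
  ((u, v) ∈ K ∧ f (u, v) < cap Vuln k (u, v)) ∨ ((v, u) ∈ K ∧ 0 < f (v, u))

theorem neg_ite (P : Prop) [Decidable P] : (if P then (-1 : ℤ) else 0) = -(if P then 1 else 0) := by
  split <;> simp

theorem aug (f : V × V → ℤ) (hb : Bounds Vuln K k f) :
    ∀ (l : List V) (a b : V), Chain (Rsd Vuln K k f) a l → (a :: l).getLast? = some b →
      (a :: l).Nodup →
      ∃ f', Bounds Vuln K k f' ∧ (∀ e, f' e ≠ f e → e.1 ∈ a :: l ∧ e.2 ∈ a :: l) ∧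
        ∀ v, fdiv K f' v
          = fdiv K f v + (if v = a then 1 else 0) - (if v = b then 1 else 0) := by
  intro l
  induction l with
  | nil =>
    intro a b _ hlast _
    have hba : b = a := by simpa using hlast.symm
    subst hba
    exact ⟨f, hb, fun e h => absurd rfl h, fun v => by ring⟩
  | cons c l' ih =>
    intro a b hc hlast hnd
    rw [List.Chain, List.chain_cons] at hc
    rw [List.getLast?_cons_cons] at hlast
    have hnd' : (c :: l').Nodup := hnd.of_cons
    have hanotin : a ∉ c :: l' := (List.nodup_cons.mp hnd).1
    obtain ⟨f₁, hb₁, hdiff₁, hdiv₁⟩ := ih c b hc.2 hlast hnd'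
    have hfa : f₁ (a, c) = f (a, c) := by
      by_contra h
      exact hanotin ((hdiff₁ _ h).1)
    have hfb : f₁ (c, a) = f (c, a) := by
      by_contra h
      exact hanotin ((hdiff₁ _ h).2)
    rcases hc.1 with ⟨hK, hlt⟩ | ⟨hK, hpos⟩
    · refine ⟨fun e => f₁ e + (if e = (a, c) then 1 else 0), ⟨?_, ?_, ?_⟩, ?_, ?_⟩
      · intro e
        dsimp only
        by_cases h : e = (a, c)
        · subst h
          rw [if_pos rfl]
          linarith [hb₁.1 (a, c)]
        · simp only [if_neg h, add_zero]
          exact hb₁.1 e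
      · intro e heK
        have h : e ≠ (a, c) := fun h => heK (h ▸ hK)
        simp only [if_neg h, add_zero]
        exact hb₁.2.1 e heK
      · intro e
        dsimp only
        by_cases h : e = (a, c)
        · subst h
          rw [if_pos rfl, hfa]
          linarith
        · simp only [if_neg h, add_zero]
          exact hb₁.2.2 e
      · intro e he
        by_cases h : e = (a, c)
        · subst h
          exact ⟨List.mem_cons_self, List.mem_cons_of_mem _ (List.mem_cons_self)⟩
        · simp only [if_neg h, add_zero] at he
          obtain ⟨h1, h2⟩ := hdiff₁ e he
          exact ⟨List.mem_cons_of_mem _ h1, List.mem_cons_of_mem _ h2⟩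
      · intro v
        rw [fdiv_update K f₁ hK 1 v, hdiv₁ v]
        dsimp only
        ring
    · refine ⟨fun e => f₁ e + (if e = (c, a) then -1 else 0), ⟨?_, ?_, ?_⟩, ?_, ?_⟩
      · intro e
        dsimp only
        by_cases h : e = (c, a)
        · subst h
          rw [if_pos rfl, hfb]
          linarith
        · simp only [if_neg h, add_zero]
          exact hb₁.1 e
      · intro e heK
        have h : e ≠ (c, a) := fun h => heK (h ▸ hK)
        simp only [if_neg h, add_zero]
        exact hb₁.2.1 e heK
      · intro e
        dsimp only
        by_cases h : e = (c, a)
        · subst h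
          rw [if_pos rfl]
          linarith [hb₁.2.2 (c, a)]
        · simp only [if_neg h, add_zero]
          exact hb₁.2.2 e
      · intro e he
        by_cases h : e = (c, a)
        · subst h
          exact ⟨List.mem_cons_of_mem _ (List.mem_cons_self), List.mem_cons_self⟩
        · simp only [if_neg h, add_zero] at he
          obtain ⟨h1, h2⟩ := hdiff₁ e he
          exact ⟨List.mem_cons_of_mem _ h1, List.mem_cons_of_mem _ h2⟩
      · intro v
        rw [fdiv_update K f₁ hK (-1) v, hdiv₁ v]
        dsimp only
        rw [neg_ite, neg_ite]
        ring

theorem fdiv_pind :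
    ∀ (l : List V) (a b : V), (a :: l).Nodup → (a :: l).getLast? = some b →
      (∀ e ∈ pathEdges (a :: l), e ∈ K) → ∀ v,
      fdiv K (fun e => if e ∈ pathEdges (a :: l) then (1 : ℤ) else 0) v
        = (if v = a then 1 else 0) - (if v = b then 1 else 0) := by
  intro l
  induction l with
  | nil =>
    intro a b _ hlast _ v
    have hba : b = a := by simpa using hlast.symm
    subst hba
    have h0 : (fun e => if e ∈ pathEdges [b] then (1 : ℤ) else 0) = fun _ => 0 := by
      funext e; simp [pathEdges]
    rw [h0, fdiv_zero]
    ring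
  | cons c l' ih =>
    intro a b hnd hlast he v
    rw [List.getLast?_cons_cons] at hlast
    have hanotin : a ∉ c :: l' := (List.nodup_cons.mp hnd).1
    have hK : (a, c) ∈ K := he (a, c) (by rw [pathEdges_cons_cons]; exact List.mem_cons_self)
    have hsplit : (fun e => if e ∈ pathEdges (a :: c :: l') then (1 : ℤ) else 0)
        = fun e => (if e ∈ pathEdges (c :: l') then (1 : ℤ) else 0)
            + (if e = (a, c) then 1 else 0) := by
      funext e
      by_cases h1 : e = (a, c)
      · subst h1
        have h2 : (a, c) ∉ pathEdges (c :: l') := by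
          intro hmem
          exact hanotin (mem_pathEdges hmem).1
        simp [pathEdges_cons_cons, h2]
      · simp [pathEdges_cons_cons, h1]
    rw [hsplit, fdiv_add, fdiv_single K hK 1,
      ih c b hnd.of_cons hlast (fun e hee => he e (by rw [pathEdges_cons_cons]; exact List.mem_cons_of_mem _ hee)) v]
    dsimp only
    ring

theorem flow_exists (hst : s ≠ t)
    (hcut : ∀ F : Finset (V × V), F ⊆ K ∩ Vuln → F.card ≤ k →
      Relation.ReflTransGen (fun a b : V => (a, b) ∈ K \ F) s t) :
    ∀ n : ℕ, n ≤ k + 1 → ∃ f, Bounds Vuln K k f ∧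
      ∀ v, fdiv K f v = if v = s then (n : ℤ) else if v = t then -(n : ℤ) else 0 := by
  intro n
  induction n with
  | zero =>
    intro _
    refine ⟨fun _ => 0, ⟨fun e => le_refl _, fun e _ => rfl, fun e => ?_⟩, fun v => ?_⟩
    · show (0 : ℤ) ≤ cap Vuln k e
      linarith [cap_one_le Vuln k e]
    · rw [fdiv_zero]
      simp
  | succ n ih =>
    intro hle
    obtain ⟨f, hb, hdiv⟩ := ih (by omega)
    classical
    have hreach : Relation.ReflTransGen (Rsd Vuln K k f) s t := by
      by_contra hnr
      set A := (Kverts K ∪ {s}).filter (fun v => Relation.ReflTransGen (Rsd Vuln K k f) s v)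
        with hA
      have hsA : s ∈ A := Finset.mem_filter.mpr ⟨by simp, Relation.ReflTransGen.refl⟩
      have htA : t ∉ A := fun h => hnr (Finset.mem_filter.mp h).2
      have hsum : ∑ v ∈ A, fdiv K f v = (n : ℤ) := by
        rw [Finset.sum_eq_single_of_mem s hsA ?_]
        · rw [hdiv s, if_pos rfl]
        · intro v hv hne
          rw [hdiv v, if_neg hne, if_neg (fun h => htA (by rwa [h] at hv))]
      rw [fdiv_sum] at hsum
      have hout : ∀ e ∈ K.filter (fun e => e.1 ∈ A ∧ e.2 ∉ A), f e = cap Vuln k e := by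
        intro e he
        rw [Finset.mem_filter] at he
        have heK := he.1
        have he1 := he.2.1
        have he2 := he.2.2
        by_contra hne
        have hlt : f e < cap Vuln k e := lt_of_le_of_ne (hb.2.2 e) hne
        have hr2 : Relation.ReflTransGen (Rsd Vuln K k f) s e.2 :=
          (Finset.mem_filter.mp he1).2.tail (Or.inl (by rw [Prod.mk.eta]; exact ⟨heK, hlt⟩))
        exact he2 (Finset.mem_filter.mpr ⟨by simp [snd_mem_Kverts K heK], hr2⟩)
      have hin : ∀ e ∈ K.filter (fun e => e.2 ∈ A ∧ e.1 ∉ A), f e = 0 := by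
        intro e he
        rw [Finset.mem_filter] at he
        have heK := he.1
        have he2 := he.2.1
        have he1 := he.2.2
        by_contra hne
        have hpos : 0 < f e := lt_of_le_of_ne (hb.1 e) (Ne.symm hne)
        have hr1 : Relation.ReflTransGen (Rsd Vuln K k f) s e.1 :=
          (Finset.mem_filter.mp he2).2.tail (Or.inr (by rw [Prod.mk.eta]; exact ⟨heK, hpos⟩))
        exact he1 (Finset.mem_filter.mpr ⟨by simp [fst_mem_Kverts K heK], hr1⟩)
      rw [Finset.sum_congr rfl hout, Finset.sum_eq_zero hin, sub_zero] at hsum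
      -- outcut is the cut
      set F := K.filter (fun e => e.1 ∈ A ∧ e.2 ∉ A) with hF
      by_cases hsafe : ∃ e₀ ∈ F, e₀ ∉ Vuln
      · obtain ⟨e₀, he₀F, he₀⟩ := hsafe
        have h1 : cap Vuln k e₀ = (k : ℤ) + 1 := by simp [cap, he₀]
        have h2 : cap Vuln k e₀ ≤ ∑ e ∈ F, cap Vuln k e :=
          Finset.single_le_sum (fun e _ => by linarith [cap_one_le Vuln k e]) he₀F
        rw [hsum, h1] at h2
        have : (n : ℤ) ≤ (k : ℤ) := by exact_mod_cast Nat.cast_le.mpr (by omega : n ≤ k)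
        linarith
      · push_neg at hsafe
        have hcap1 : ∀ e ∈ F, cap Vuln k e = 1 := fun e heF => by simp [cap, hsafe e heF]
        have hcard : (F.card : ℤ) = (n : ℤ) := by
          rw [← hsum, Finset.sum_congr rfl hcap1]
          simp
        have hcardn : F.card = n := by exact_mod_cast hcard
        have hFsub : F ⊆ K ∩ Vuln := by
          intro e heF
          rw [Finset.mem_inter]
          exact ⟨Finset.filter_subset _ _ heF, hsafe e heF⟩
        have hpath := hcut F hFsub (by omega)
        obtain ⟨u, v, hQu, hQv, huv⟩ := crossing hpath Relation.ReflTransGen.refl hnr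
        rw [Finset.mem_sdiff] at huv
        have huvF : (u, v) ∈ F := by
          rw [hF, Finset.mem_filter]
          refine ⟨huv.1, Finset.mem_filter.mpr ⟨by simp [fst_mem_Kverts K huv.1], hQu⟩, ?_⟩
          intro hvA
          exact hQv (Finset.mem_filter.mp hvA).2
        exact huv.2 huvF
    obtain ⟨l₀, hc₀, hl₀⟩ := List.exists_isChain_cons_of_relationReflTransGen hreach
    obtain ⟨m, hm1, hm2, hm3, _⟩ := exists_nodup_chain_aux l₀.length l₀ s le_rfl hc₀
    have hml : (s :: m).getLast? = some t := by
      rw [hm2, List.getLast?_eq_getLast (List.cons_ne_nil _ _), hl₀]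
    obtain ⟨f', hb', _, hdiv'⟩ := aug Vuln K k f hb m s t hm1 hml hm3
    refine ⟨f', hb', fun v => ?_⟩
    rw [hdiv' v, hdiv v]
    by_cases h1 : v = s
    · subst h1
      simp only [if_pos rfl, if_neg hst]
      push_cast
      ring
    · by_cases h2 : v = t
      · subst h2
        simp only [if_neg h1, if_pos rfl]
        push_cast
        ring
      · simp only [if_neg h1, if_neg h2]
        ring
theorem decomp (hst : s ≠ t) :
    ∀ (n : ℕ) (f : V × V → ℤ),
      (∀ e, 0 ≤ f e) → (∀ e ∉ K, f e = 0) →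
      (∀ v, fdiv K f v = if v = s then (n : ℤ) else if v = t then -(n : ℤ) else 0) →
      ∃ P : Fin n → List V,
        (∀ i, (P i).head? = some s ∧ (P i).getLast? = some t ∧ (P i).Nodup ∧
          ∀ e ∈ pathEdges (P i), e ∈ K) ∧
        (∀ e, (∑ i : Fin n, (if e ∈ pathEdges (P i) then (1 : ℤ) else 0)) ≤ f e) := by
  intro n
  induction n with
  | zero =>
    intro f h0 _ _
    exact ⟨Fin.elim0, fun i => i.elim0, fun e => by simpa using h0 e⟩
  | succ n ih =>
    intro f h0 hsupp hdiv
    classical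
    have hreach : Relation.ReflTransGen (fun u v => (u, v) ∈ K ∧ 0 < f (u, v)) s t := by
      by_contra hnr
      set R := fun u v => (u, v) ∈ K ∧ 0 < f (u, v) with hR
      set A := (Kverts K ∪ {s}).filter (fun v => Relation.ReflTransGen R s v) with hA
      have hsA : s ∈ A := Finset.mem_filter.mpr ⟨by simp, Relation.ReflTransGen.refl⟩
      have htA : t ∉ A := fun h => hnr (Finset.mem_filter.mp h).2
      have hsum : ∑ v ∈ A, fdiv K f v = ((n : ℤ) + 1) := by
        rw [Finset.sum_eq_single_of_mem s hsA ?_]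
        · rw [hdiv s, if_pos rfl]
          push_cast
          ring
        · intro v hv hne
          rw [hdiv v, if_neg hne, if_neg (fun h => htA (by rwa [h] at hv))]
      rw [fdiv_sum] at hsum
      have hout : ∀ e ∈ K.filter (fun e => e.1 ∈ A ∧ e.2 ∉ A), f e = 0 := by
        intro e he
        rw [Finset.mem_filter] at he
        have heK := he.1
        have he1 := he.2.1
        have he2 := he.2.2
        by_contra hne
        have hpos : 0 < f e := lt_of_le_of_ne (h0 e) (Ne.symm hne)
        have hr2 : Relation.ReflTransGen R s e.2 :=
          (Finset.mem_filter.mp he1).2.tail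
            (show R e.1 e.2 by simp only [hR, Prod.mk.eta]; exact ⟨heK, hpos⟩)
        exact he2 (Finset.mem_filter.mpr ⟨by simp [snd_mem_Kverts K heK], hr2⟩)
      have hin : (0:ℤ) ≤ ∑ e ∈ K.filter (fun e => e.2 ∈ A ∧ e.1 ∉ A), f e :=
        Finset.sum_nonneg (fun e _ => h0 e)
      rw [Finset.sum_eq_zero hout] at hsum
      have : (0:ℤ) ≤ (n : ℤ) := Int.natCast_nonneg n
      linarith
    obtain ⟨l₀, hc₀, hl₀⟩ := List.exists_isChain_cons_of_relationReflTransGen hreach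
    obtain ⟨m, hm1, hm2, hm3, _⟩ := exists_nodup_chain_aux l₀.length l₀ s le_rfl hc₀
    have hml : (s :: m).getLast? = some t := by
      rw [hm2, List.getLast?_eq_getLast (List.cons_ne_nil _ _), hl₀]
    have hedge : ∀ e ∈ pathEdges (s :: m), e ∈ K ∧ 0 < f e := by
      intro e hee
      have := chain_pathEdges m s hm1 e hee
      rwa [Prod.mk.eta] at this
    set f' := fun e => f e - (if e ∈ pathEdges (s :: m) then (1:ℤ) else 0) with hf'
    have h0' : ∀ e, 0 ≤ f' e := by
      intro e
      rw [hf']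
      dsimp only
      by_cases h : e ∈ pathEdges (s :: m)
      · rw [if_pos h]
        linarith [(hedge e h).2]
      · rw [if_neg h]
        simpa using h0 e
    have hsupp' : ∀ e ∉ K, f' e = 0 := by
      intro e heK
      have h : e ∉ pathEdges (s :: m) := fun hmem => heK (hedge e hmem).1
      rw [hf']
      dsimp only
      rw [if_neg h, hsupp e heK]
      ring
    have hdiv' : ∀ v, fdiv K f' v = if v = s then (n : ℤ) else if v = t then -(n : ℤ) else 0 := by
      intro v
      rw [hf', fdiv_sub, fdiv_pind K m s t hm3 hml (fun e hee => (hedge e hee).1) v, hdiv v]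
      by_cases h1 : v = s
      · subst h1
        simp only [if_pos rfl, if_neg hst]
        push_cast
        ring
      · by_cases h2 : v = t
        · subst h2
          simp only [if_neg h1, if_pos rfl]
          push_cast
          ring
        · simp only [if_neg h1, if_neg h2]
          ring
    obtain ⟨P', hP'1, hP'2⟩ := ih f' h0' hsupp' hdiv'
    refine ⟨Fin.cases (s :: m) P', ?_, ?_⟩
    · intro i
      refine Fin.cases ?_ ?_ i
      · simp only [Fin.cases_zero]
        exact ⟨rfl, hml, hm3, fun e hee => (hedge e hee).1⟩
      · intro j
        simp only [Fin.cases_succ]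
        exact hP'1 j
    · intro e
      rw [Fin.sum_univ_succ]
      simp only [Fin.cases_zero, Fin.cases_succ]
      have hc := hP'2 e
      rw [hf'] at hc
      dsimp only at hc
      rw [le_sub_iff_add_le, add_comm] at hc
      convert hc
      all_goals exact if_congr Iff.rfl rfl rfl
end Main
end FTPaux


/-- An instance `(G, s, t, k, ℓ)` of Fault-Tolerant Path is a yes-instance if and
only if there exist `k+1` directed `s`-`t`-paths `P 0, …, P k` in `G` such that any
two distinct paths share only safe edges, and the total weight of the union of all
edges used by the paths is at most `ℓ`. -/
theorem stmt_7 {V : Type*} [DecidableEq V] (Safe Vuln : Finset (V × V))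
    (hdisj : Disjoint Safe Vuln) (w : V × V → ℕ)
    (hw : ∀ e ∈ Safe ∪ Vuln, 1 ≤ w e) (s t : V) (k ℓ : ℕ) :
    (∃ K : Finset (V × V), FTPSolution Safe Vuln w s t k ℓ K) ↔
      ∃ P : Fin (k + 1) → List V,
        (∀ i, (P i).head? = some s ∧ (P i).getLast? = some t ∧ (P i).Nodup ∧
          ∀ e ∈ pathEdges (P i), e ∈ Safe ∪ Vuln) ∧
        (∀ i j, i ≠ j →
          ∀ e ∈ pathEdges (P i), e ∈ pathEdges (P j) → e ∈ Safe) ∧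
        (∑ e ∈ Finset.univ.biUnion (fun i => (pathEdges (P i)).toFinset), w e) ≤ ℓ := by

  classical
  constructor
  · rintro ⟨K, hK⟩
    unfold FTPSolution at hK
    obtain ⟨hKsub, hKw, hKcut⟩ := hK
    by_cases hst : s = t
    · subst hst
      refine ⟨fun _ => [s], fun i => ⟨rfl, by simp, List.nodup_singleton _, ?_⟩, ?_, ?_⟩
      · intro e he
        simp [pathEdges] at he
      · intro i j _ e he
        simp [pathEdges] at he
      · rw [show (Finset.univ.biUnion fun _ : Fin (k + 1) => (pathEdges [s]).toFinset) = ∅ by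
            ext e; simp [pathEdges]]
        simp
    · obtain ⟨f, hb, hdiv⟩ := FTPaux.flow_exists Vuln K s t k hst hKcut (k + 1) le_rfl
      obtain ⟨P, hP1, hP2⟩ := FTPaux.decomp K s t hst (k + 1) f hb.1 hb.2.1 hdiv
      refine ⟨P, fun i => ⟨(hP1 i).1, (hP1 i).2.1, (hP1 i).2.2.1,
        fun e he => hKsub ((hP1 i).2.2.2 e he)⟩, ?_, ?_⟩
      · intro i j hij e hei hej
        by_contra hsafe
        have heK : e ∈ K := (hP1 i).2.2.2 e hei
        have hVuln : e ∈ Vuln := by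
          rcases Finset.mem_union.mp (hKsub heK) with h | h
          · exact absurd h hsafe
          · exact h
        have hcap : FTPaux.cap Vuln k e = 1 := if_pos hVuln
        have hpair : (∑ i' ∈ ({i, j} : Finset (Fin (k + 1))),
            (if e ∈ pathEdges (P i') then (1 : ℤ) else 0)) = 2 := by
          rw [Finset.sum_pair hij, if_pos hei, if_pos hej]
          norm_num
        have hle : (∑ i' ∈ ({i, j} : Finset (Fin (k + 1))),
              (if e ∈ pathEdges (P i') then (1 : ℤ) else 0))
            ≤ ∑ i' : Fin (k + 1), (if e ∈ pathEdges (P i') then (1 : ℤ) else 0) :=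
          Finset.sum_le_sum_of_subset_of_nonneg (Finset.subset_univ _)
            (fun x _ _ => by split_ifs <;> norm_num)
        have hcaple := hb.2.2 e
        rw [hcap] at hcaple
        linarith [hP2 e]
      · have hsub : Finset.univ.biUnion (fun i => (pathEdges (P i)).toFinset) ⊆ K := by
          intro e he
          obtain ⟨i, _, hei⟩ := Finset.mem_biUnion.mp he
          exact (hP1 i).2.2.2 e (List.mem_toFinset.mp hei)
        exact le_trans (Finset.sum_le_sum_of_subset hsub) hKw
  · rintro ⟨P, hP1, hP2, hP3⟩
    set KK := Finset.univ.biUnion (fun i : Fin (k + 1) => (pathEdges (P i)).toFinset) with hKK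
    refine ⟨KK, ?_, ?_, ?_⟩
    · intro e he
      obtain ⟨i, _, hei⟩ := Finset.mem_biUnion.mp he
      exact (hP1 i).2.2.2 e (List.mem_toFinset.mp hei)
    · exact hP3
    · intro F hF hFcard
      have hex : ∀ e : V × V, ∃ i : Fin (k + 1), e ∈ F → e ∈ pathEdges (P i) := by
        intro e
        by_cases he : e ∈ F
        · have heKK : e ∈ KK := (Finset.mem_inter.mp (hF he)).1
          obtain ⟨i, _, hei⟩ := Finset.mem_biUnion.mp heKK
          exact ⟨i, fun _ => List.mem_toFinset.mp hei⟩
        · exact ⟨0, fun h => absurd h he⟩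
      choose g hg using hex
      obtain ⟨i₀, hi₀⟩ : ∃ i₀ : Fin (k + 1), i₀ ∉ F.image g := by
        by_contra h
        push_neg at h
        have hsub : (Finset.univ : Finset (Fin (k + 1))) ⊆ F.image g := fun i _ => h i
        have h1 := Finset.card_le_card hsub
        have h2 := Finset.card_image_le (f := g) (s := F)
        rw [Finset.card_univ, Fintype.card_fin] at h1
        omega
      have havoid : ∀ e ∈ F, e ∉ pathEdges (P i₀) := by
        intro e he hmem
        by_cases hgi : g e = i₀
        · exact hi₀ (Finset.mem_image.mpr ⟨e, he, hgi⟩)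
        · have hsafe := hP2 (g e) i₀ hgi e (hg e he) hmem
          have hVuln : e ∈ Vuln := (Finset.mem_inter.mp (hF he)).2
          exact (Finset.disjoint_left.mp hdisj hsafe) hVuln
      refine FTPaux.reflTransGen_of_path (P i₀) s t (hP1 i₀).1 (hP1 i₀).2.1 ?_
      intro e hee
      show (e.1, e.2) ∈ KK \ F
      rw [Prod.mk.eta, Finset.mem_sdiff]
      constructor
      · exact Finset.mem_biUnion.mpr ⟨i₀, Finset.mem_univ _, List.mem_toFinset.mpr hee⟩
      · exact fun hF' => havoid e hF' hee
end

section
/- Consider the Steiner Tree to Fault-Tolerant Path reduction: given an undirected graph G = (V,E) with terminal set T ⊆ V and budget d, construct G' by making all edges of G safe, adding a new vertex s joined by a vulnerable edge to each terminal, choosing t ∈ T, setting ℓ = d + |T| and k = |T| - 1. Then G contains a Steiner tree for T with at most d edges if and only if the constructed Fault-Tolerant Path instance is a yes-instance. -/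
open SimpleGraph

section Aux

variable {V : Type*} [DecidableEq V]

private lemma st13_star_inj : Function.Injective (fun u : V => s(none, some u)) := by
  intro a b h
  simp only [Sym2.eq_iff] at h
  rcases h with ⟨-, h⟩ | ⟨h, -⟩
  · exact Option.some_injective V h
  · exact absurd h (by simp)

private lemma st13_exists_minimal {α : Type*} [DecidableEq α] (P : Finset α → Prop) :
    ∀ S : Finset α, P S → ∃ S', S' ⊆ S ∧ P S' ∧ ∀ e ∈ S', ¬ P (S'.erase e) := by
  intro S
  induction S using Finset.strongInduction with
  | _ S ih =>
    intro hS
    by_cases h : ∃ e ∈ S, P (S.erase e)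
    · obtain ⟨e, he, hPe⟩ := h
      obtain ⟨S', hsub, hPS', hmin⟩ := ih (S.erase e) (Finset.erase_ssubset he) hPe
      exact ⟨S', hsub.trans (Finset.erase_subset _ _), hPS', hmin⟩
    · push_neg at h
      exact ⟨S, le_refl _, hS, h⟩

private lemma st13_reach_erase {S : Finset (Sym2 V)} {e : Sym2 V} {x y : V}
    (he : e = s(x, y))
    (hxy : (SimpleGraph.fromEdgeSet (↑(S.erase e) : Set (Sym2 V))).Reachable x y)
    {a b : V} (h : (SimpleGraph.fromEdgeSet (↑S : Set (Sym2 V))).Reachable a b) :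
    (SimpleGraph.fromEdgeSet (↑(S.erase e) : Set (Sym2 V))).Reachable a b := by
  obtain ⟨w⟩ := h
  induction w with
  | nil => exact Reachable.refl _
  | @cons u c d hadj w ih =>
    refine Reachable.trans ?_ ih
    rw [SimpleGraph.fromEdgeSet_adj] at hadj
    by_cases hec : s(u, c) = e
    · rw [he, Sym2.eq_iff] at hec
      rcases hec with ⟨h1, h2⟩ | ⟨h1, h2⟩
      · subst h1; subst h2; exact hxy
      · subst h1; subst h2; exact hxy.symm
    · refine SimpleGraph.Adj.reachable ?_
      rw [SimpleGraph.fromEdgeSet_adj]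
      exact ⟨by simpa [Finset.mem_erase] using And.intro hadj.1 hec, hadj.2⟩

/-- The subgraph on the component of `t₀` with edges from `S`. -/
private def st13_mkSub (G : SimpleGraph V) (S : Finset (Sym2 V)) (t₀ : V)
    (hSG : (↑S : Set (Sym2 V)) ⊆ G.edgeSet) : G.Subgraph where
  verts := {v | (SimpleGraph.fromEdgeSet (↑S : Set (Sym2 V))).Reachable v t₀}
  Adj a b := (SimpleGraph.fromEdgeSet (↑S : Set (Sym2 V))).Adj a b ∧
    (SimpleGraph.fromEdgeSet (↑S : Set (Sym2 V))).Reachable a t₀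
  adj_sub := by
    intro v w h
    obtain ⟨h1, -⟩ := h
    rw [SimpleGraph.fromEdgeSet_adj] at h1
    exact G.mem_edgeSet.1 (hSG h1.1)
  edge_vert := by
    intro v w h
    exact h.2
  symm := by
    refine ⟨fun a b h => ?_⟩
    exact ⟨h.1.symm, (h.1.symm.reachable).trans h.2⟩

private lemma st13_mkSub_reach (G : SimpleGraph V) (S : Finset (Sym2 V)) (t₀ : V)
    (hSG : (↑S : Set (Sym2 V)) ⊆ G.edgeSet) :
    ∀ (a b : V) (w : (SimpleGraph.fromEdgeSet (↑S : Set (Sym2 V))).Walk a b)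
      (ha : a ∈ (st13_mkSub G S t₀ hSG).verts) (hb : b ∈ (st13_mkSub G S t₀ hSG).verts),
      (st13_mkSub G S t₀ hSG).coe.Reachable ⟨a, ha⟩ ⟨b, hb⟩ := by
  intro a b w
  induction w with
  | nil => intro ha hb; exact Reachable.refl _
  | @cons u c _ hadj w ih =>
    intro ha hb
    have hc : c ∈ (st13_mkSub G S t₀ hSG).verts := (hadj.symm.reachable).trans ha
    refine Reachable.trans ?_ (ih hc hb)
    refine SimpleGraph.Adj.reachable ?_
    show (st13_mkSub G S t₀ hSG).Adj u c
    exact ⟨hadj, ha⟩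

private lemma st13_mkSub_connected (G : SimpleGraph V) (S : Finset (Sym2 V)) (t₀ : V)
    (hSG : (↑S : Set (Sym2 V)) ⊆ G.edgeSet) :
    (st13_mkSub G S t₀ hSG).Connected := by
  rw [SimpleGraph.Subgraph.connected_iff]
  refine ⟨⟨?_⟩, ⟨t₀, Reachable.refl _⟩⟩
  rintro ⟨a, ha⟩ ⟨b, hb⟩
  obtain ⟨wa⟩ := ha
  obtain ⟨wb⟩ := hb
  exact ((st13_mkSub_reach G S t₀ hSG a t₀ wa ⟨wa⟩ (Reachable.refl _)).trans
    (st13_mkSub_reach G S t₀ hSG b t₀ wb ⟨wb⟩ (Reachable.refl _)).symm)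

private lemma st13_mkSub_acyclic (G : SimpleGraph V) (S : Finset (Sym2 V)) (t₀ : V) (T : Finset V)
    (hSG : (↑S : Set (Sym2 V)) ⊆ G.edgeSet)
    (hP : ∀ u ∈ T, (SimpleGraph.fromEdgeSet (↑S : Set (Sym2 V))).Reachable u t₀)
    (hmin : ∀ e ∈ S,
      ¬ ∀ u ∈ T, (SimpleGraph.fromEdgeSet (↑(S.erase e) : Set (Sym2 V))).Reachable u t₀) :
    (st13_mkSub G S t₀ hSG).coe.IsAcyclic := by
  intro x c hc
  cases c with
  | nil => exact hc.ne_nil rfl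
  | @cons _ b _ hadj p =>
    have hxb : (SimpleGraph.fromEdgeSet (↑S : Set (Sym2 V))).Adj x.1 b.1 := hadj.1
    rw [SimpleGraph.fromEdgeSet_adj] at hxb
    have hnodup := hc.edges_nodup
    rw [Walk.edges_cons, List.nodup_cons] at hnodup
    have hnotmem : s(x, b) ∉ p.edges := hnodup.1
    have hreach' : ∀ (a z : (st13_mkSub G S t₀ hSG).verts)
        (q : (st13_mkSub G S t₀ hSG).coe.Walk a z),
        s(x, b) ∉ q.edges →
        (SimpleGraph.fromEdgeSet (↑(S.erase s(x.1, b.1)) : Set (Sym2 V))).Reachable a.1 z.1 := by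
      intro a z q
      induction q with
      | nil => intro _; exact Reachable.refl _
      | @cons u c _ hadj' q ih =>
        intro hmem
        rw [Walk.edges_cons, List.mem_cons] at hmem
        push_neg at hmem
        refine Reachable.trans ?_ (ih hmem.2)
        refine SimpleGraph.Adj.reachable ?_
        rw [SimpleGraph.fromEdgeSet_adj]
        have huc : (SimpleGraph.fromEdgeSet (↑S : Set (Sym2 V))).Adj u.1 c.1 := hadj'.1
        rw [SimpleGraph.fromEdgeSet_adj] at huc
        refine ⟨?_, huc.2⟩
        have hne : s(u.1, c.1) ≠ s(x.1, b.1) := by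
          intro hcontra
          apply hmem.1
          have h2 : Sym2.map Subtype.val s(u, c) = Sym2.map Subtype.val s(x, b) := by
            simpa [Sym2.map_pair_eq] using hcontra
          exact (Sym2.map.injective Subtype.val_injective h2).symm
        simpa [Finset.mem_erase] using And.intro huc.1 hne
    have hbx : (SimpleGraph.fromEdgeSet
        (↑(S.erase s(x.1, b.1)) : Set (Sym2 V))).Reachable b.1 x.1 :=
      hreach' b x p hnotmem
    refine hmin s(x.1, b.1) (by simpa using hxb.1) ?_
    intro u hu
    exact st13_reach_erase rfl hbx.symm (hP u hu)

end Aux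

/-- Steiner Tree to Fault-Tolerant Path reduction: given an undirected graph `G`
with terminal set `T` and budget `d`, make all edges of `G` safe, add a new vertex
`s = none` joined by a vulnerable edge to each terminal, pick a terminal `t₀`, and
set `ℓ = d + |T|` and `k = |T| - 1`.  Then `G` contains a Steiner tree for `T` with
at most `d` edges iff the constructed Fault-Tolerant Path instance is a
yes-instance. -/
theorem stmt_13 {V : Type*} [Fintype V] [DecidableEq V]
    (G : SimpleGraph V) [DecidableRel G.Adj] (T : Finset V) (d : ℕ)
    (t₀ : V) (ht₀ : t₀ ∈ T) :
    (∃ H : G.Subgraph, (↑T : Set V) ⊆ H.verts ∧ H.Connected ∧ H.coe.IsAcyclic ∧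
        H.edgeSet.ncard ≤ d) ↔
      (∃ K : Finset (Sym2 (Option V)),
        K ⊆ G.edgeFinset.image (Sym2.map some) ∪
              T.image (fun u : V => s(none, some u)) ∧
        K.card ≤ d + T.card ∧
        ∀ F : Finset (Sym2 (Option V)),
          F ⊆ K ∩ T.image (fun u : V => s(none, some u)) → F.card ≤ T.card - 1 →
            (SimpleGraph.fromEdgeSet (↑(K \ F) : Set (Sym2 (Option V)))).Reachable
              none (some t₀)) := by
  classical
  constructor
  · -- forward direction
    rintro ⟨H, hT, hconn, hacy, hcard⟩
    set EH := (Set.toFinite H.edgeSet).toFinset with hEH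
    refine ⟨EH.image (Sym2.map some) ∪ T.image (fun u : V => s(none, some u)), ?_, ?_, ?_⟩
    · apply Finset.union_subset_union_left
      apply Finset.image_subset_image
      intro e he
      rw [hEH, Set.Finite.mem_toFinset] at he
      exact SimpleGraph.mem_edgeFinset.2 (H.edgeSet_subset he)
    · refine (Finset.card_union_le _ _).trans (add_le_add ?_ (Finset.card_image_le))
      refine (Finset.card_image_le).trans ?_
      have : EH.card = H.edgeSet.ncard := (Set.ncard_eq_toFinset_card _ _).symm
      rw [this]
      exact hcard
    · intro F hF hFcard
      have hTpos : 1 ≤ T.card := Finset.card_pos.2 ⟨t₀, ht₀⟩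
      have hex : ∃ u ∈ T, s(none, (some u : Option V)) ∉ F := by
        by_contra hcon
        push_neg at hcon
        have hsub : T.image (fun u : V => s(none, some u)) ⊆ F := by
          intro e he
          obtain ⟨u, hu, rfl⟩ := Finset.mem_image.1 he
          exact hcon u hu
        have h2 := (Finset.card_le_card hsub).trans hFcard
        rw [Finset.card_image_of_injective _ st13_star_inj] at h2
        omega
      obtain ⟨u, huT, huF⟩ := hex
      have hedge : s(none, (some u : Option V)) ∈
          ((EH.image (Sym2.map some) ∪ T.image (fun u : V => s(none, some u))) \ F) :=
        Finset.mem_sdiff.2 ⟨Finset.mem_union_right _ (Finset.mem_image_of_mem _ huT), huF⟩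
      have hadj : (SimpleGraph.fromEdgeSet
          (↑((EH.image (Sym2.map some) ∪ T.image (fun u : V => s(none, some u))) \ F) :
            Set (Sym2 (Option V)))).Adj none (some u) := by
        rw [SimpleGraph.fromEdgeSet_adj]
        exact ⟨by exact_mod_cast hedge, by simp⟩
      refine hadj.reachable.trans ?_
      have hφ : ∀ {a b : H.verts}, H.coe.Adj a b → (SimpleGraph.fromEdgeSet
          (↑((EH.image (Sym2.map some) ∪ T.image (fun u : V => s(none, some u))) \ F) :
            Set (Sym2 (Option V)))).Adj (some a.1) (some b.1) := by
        intro a b hab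
        have hab' : H.Adj a.1 b.1 := hab
        rw [SimpleGraph.fromEdgeSet_adj]
        constructor
        · rw [Finset.mem_coe, Finset.mem_sdiff]
          constructor
          · apply Finset.mem_union_left
            refine Finset.mem_image.2 ⟨s(a.1, b.1), ?_, by rw [Sym2.map_pair_eq]⟩
            rw [hEH, Set.Finite.mem_toFinset]
            exact (SimpleGraph.Subgraph.mem_edgeSet).2 hab'
          · intro hmem
            have hm2 := hF hmem
            obtain ⟨w, -, hw⟩ := Finset.mem_image.1 (Finset.mem_inter.1 hm2).2
            have hn : (none : Option V) ∈ (s((some a.1 : Option V), some b.1) :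
                Sym2 (Option V)) := by
              rw [← hw]; exact Sym2.mem_mk_left _ _
            simp at hn
        · simpa using hab'.ne
      have hr : H.coe.Reachable ⟨u, hT huT⟩ ⟨t₀, hT ht₀⟩ := hconn ⟨u, hT huT⟩ ⟨t₀, hT ht₀⟩
      exact hr.map ⟨fun v => some v.1, hφ⟩
  · -- backward direction
    rintro ⟨K, hKsub, hKcard, hFT⟩
    have hstar_sub : T.image (fun u : V => s(none, some u)) ⊆ K := by
      intro e he
      obtain ⟨u, huT, rfl⟩ := Finset.mem_image.1 he
      by_contra hK
      have hFsub : K ∩ T.image (fun u : V => s(none, some u)) ⊆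
          K ∩ T.image (fun u : V => s(none, some u)) := le_refl _
      have hFcard : (K ∩ T.image (fun u : V => s(none, some u))).card ≤ T.card - 1 := by
        have hsubset : K ∩ T.image (fun u : V => s(none, some u)) ⊆
            (T.image (fun u : V => s(none, some u))).erase s(none, some u) := by
          intro x hx
          rw [Finset.mem_erase]
          exact ⟨fun h => hK (h ▸ (Finset.mem_inter.1 hx).1), (Finset.mem_inter.1 hx).2⟩
        refine (Finset.card_le_card hsubset).trans ?_
        rw [Finset.card_erase_of_mem (Finset.mem_image_of_mem _ huT),
          Finset.card_image_of_injective _ st13_star_inj]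
      obtain ⟨w⟩ := hFT _ hFsub hFcard
      cases w with
      | cons hadj w' =>
        rw [SimpleGraph.fromEdgeSet_adj] at hadj
        obtain ⟨hmem, -⟩ := hadj
        rw [Finset.mem_coe, Finset.mem_sdiff] at hmem
        obtain ⟨hmemK, hmemF⟩ := hmem
        rcases Finset.mem_union.1 (hKsub hmemK) with h | h
        · obtain ⟨f, -, hf⟩ := Finset.mem_image.1 h
          have hn : (none : Option V) ∈ Sym2.map some f := by
            rw [hf]; exact Sym2.mem_mk_left _ _
          rw [Sym2.mem_map] at hn
          obtain ⟨z, -, hz⟩ := hn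
          exact Option.some_ne_none z hz
        · exact hmemF (Finset.mem_inter.2 ⟨hmemK, h⟩)
    set E₀ := G.edgeFinset.filter (fun e => Sym2.map some e ∈ K) with hE₀
    have hE₀G : (↑E₀ : Set (Sym2 V)) ⊆ G.edgeSet := by
      intro e he
      rw [Finset.mem_coe, hE₀, Finset.mem_filter] at he
      exact SimpleGraph.mem_edgeFinset.1 he.1
    have hmapinj : Function.Injective (Sym2.map (some : V → Option V)) :=
      Sym2.map.injective (Option.some_injective V)
    have hE₀card : E₀.card ≤ d := by
      have h1 : E₀.image (Sym2.map some) ⊆ K \ T.image (fun u : V => s(none, some u)) := by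
        intro e he
        obtain ⟨f, hf, rfl⟩ := Finset.mem_image.1 he
        rw [Finset.mem_sdiff]
        refine ⟨(Finset.mem_filter.1 hf).2, ?_⟩
        intro h
        obtain ⟨w, -, hw⟩ := Finset.mem_image.1 h
        have hn : (none : Option V) ∈ Sym2.map some f := by
          rw [← hw]; exact Sym2.mem_mk_left _ _
        rw [Sym2.mem_map] at hn
        obtain ⟨z, -, hz⟩ := hn
        exact Option.some_ne_none z hz
      have h2 := Finset.card_le_card h1
      rw [Finset.card_image_of_injective _ hmapinj,
        Finset.card_sdiff_of_subset hstar_sub, Finset.card_image_of_injective _ st13_star_inj] at h2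
      omega
    have hreach : ∀ u ∈ T, (SimpleGraph.fromEdgeSet (↑E₀ : Set (Sym2 V))).Reachable u t₀ := by
      intro u huT
      have hFsub : (T.image (fun u : V => s(none, some u))).erase s(none, some u) ⊆
          K ∩ T.image (fun u : V => s(none, some u)) := by
        intro x hx
        exact Finset.mem_inter.2 ⟨hstar_sub (Finset.erase_subset _ _ hx),
          Finset.erase_subset _ _ hx⟩
      have hFcard : ((T.image (fun u : V => s(none, some u))).erase s(none, some u)).card ≤
          T.card - 1 := by
        rw [Finset.card_erase_of_mem (Finset.mem_image_of_mem _ huT),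
          Finset.card_image_of_injective _ st13_star_inj]
      obtain ⟨w⟩ := hFT _ hFsub hFcard
      have key : ∀ {a b : Option V}
          (_ : (SimpleGraph.fromEdgeSet
            (↑(K \ (T.image (fun u : V => s(none, some u))).erase s(none, some u)) :
              Set (Sym2 (Option V)))).Walk a b),
          (SimpleGraph.fromEdgeSet (↑E₀ : Set (Sym2 V))).Reachable (a.getD u) (b.getD u) := by
        intro a b w
        induction w with
        | nil => exact Reachable.refl _
        | @cons p q r hadj w' ih =>
          refine Reachable.trans ?_ ih
          rw [SimpleGraph.fromEdgeSet_adj] at hadj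
          obtain ⟨hmem, hne⟩ := hadj
          rw [Finset.mem_coe, Finset.mem_sdiff] at hmem
          obtain ⟨hK', hF'⟩ := hmem
          rcases Finset.mem_union.1 (hKsub hK') with h | h
          · obtain ⟨f, hfG, hf⟩ := Finset.mem_image.1 h
            induction f with
            | _ x y =>
              rw [Sym2.map_pair_eq, Sym2.eq_iff] at hf
              have hfE : s(x, y) ∈ E₀ := by
                rw [hE₀, Finset.mem_filter]
                refine ⟨hfG, ?_⟩
                rw [Sym2.map_pair_eq]
                rcases hf with ⟨h1, h2⟩ | ⟨h1, h2⟩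
                · rw [h1, h2]; exact hK'
                · rw [h1, h2, Sym2.eq_swap]; exact hK'
              have hxy : x ≠ y :=
                (G.mem_edgeSet.1 (SimpleGraph.mem_edgeFinset.1 hfG)).ne
              have hadj₀ : (SimpleGraph.fromEdgeSet (↑E₀ : Set (Sym2 V))).Adj x y := by
                rw [SimpleGraph.fromEdgeSet_adj]
                exact ⟨by exact_mod_cast hfE, hxy⟩
              rcases hf with ⟨h1, h2⟩ | ⟨h1, h2⟩
              · rw [← h1, ← h2]; simpa using hadj₀.reachable
              · rw [← h1, ← h2]; simpa using hadj₀.symm.reachable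
          · obtain ⟨z, hzT, hz⟩ := Finset.mem_image.1 h
            by_cases hzu : z = u
            · subst hzu
              rw [Sym2.eq_iff] at hz
              rcases hz with ⟨h1, h2⟩ | ⟨h1, h2⟩ <;>
                · rw [← h1, ← h2]; exact Reachable.refl _
            · exfalso
              apply hF'
              refine Finset.mem_erase.2 ⟨?_, h⟩
              rw [← hz]
              intro hcontra
              exact hzu (st13_star_inj hcontra)
      have hfin := key w
      simpa using hfin
    obtain ⟨S, hSsub, hP, hmin⟩ := st13_exists_minimal
      (fun S => ∀ u ∈ T, (SimpleGraph.fromEdgeSet (↑S : Set (Sym2 V))).Reachable u t₀)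
      E₀ hreach
    have hSG : (↑S : Set (Sym2 V)) ⊆ G.edgeSet := fun e he => hE₀G (hSsub he)
    refine ⟨st13_mkSub G S t₀ hSG, ?_, st13_mkSub_connected G S t₀ hSG,
      st13_mkSub_acyclic G S t₀ T hSG hP hmin, ?_⟩
    · intro v hv
      exact hP v hv
    · have hsub : (st13_mkSub G S t₀ hSG).edgeSet ⊆ (↑S : Set (Sym2 V)) := by
        intro e
        induction e with
        | _ a b =>
          intro he
          have hadj : (st13_mkSub G S t₀ hSG).Adj a b := he
          have h1 := hadj.1
          rw [SimpleGraph.fromEdgeSet_adj] at h1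
          exact h1.1
      calc (st13_mkSub G S t₀ hSG).edgeSet.ncard ≤ (↑S : Set (Sym2 V)).ncard :=
            Set.ncard_le_ncard hsub (S.finite_toSet)
        _ = S.card := Set.ncard_coe_finset S
        _ ≤ d := (Finset.card_le_card hSsub).trans hE₀card
end

section
/- In the Steiner Tree reduction above, any solution K to the constructed Fault-Tolerant Path instance must contain all |T| vulnerable edges incident to s. -/
/-- In the Steiner Tree to Fault-Tolerant Path reduction (safe copies of the edges
of `G`, a new vertex `s = none` joined to each terminal by a vulnerable edge,
`ℓ = d + |T|`, `k = |T| - 1`), any solution `K` to the constructed Fault-Tolerant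
Path instance must contain all `|T|` vulnerable edges incident to `s`. -/
theorem stmt_14 {V : Type*} [Fintype V] [DecidableEq V]
    (G : SimpleGraph V) [DecidableRel G.Adj] (T : Finset V) (d : ℕ)
    (t₀ : V) (ht₀ : t₀ ∈ T)
    (K : Finset (Sym2 (Option V)))
    (hKsub : K ⊆ G.edgeFinset.image (Sym2.map some) ∪
        T.image (fun u : V => s(none, some u)))
    (hKcard : K.card ≤ d + T.card)
    (hKsol : ∀ F : Finset (Sym2 (Option V)),
      F ⊆ K ∩ T.image (fun u : V => s(none, some u)) → F.card ≤ T.card - 1 →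
        (SimpleGraph.fromEdgeSet (↑(K \ F) : Set (Sym2 (Option V)))).Reachable
          none (some t₀)) :
    T.image (fun u : V => s(none, some u)) ⊆ K := by
  intro e he
  by_contra heK
  obtain ⟨u, huT, rfl⟩ := Finset.mem_image.mp he
  set f : V → Sym2 (Option V) := fun u : V => s(none, some u) with hf
  set F : Finset (Sym2 (Option V)) := K ∩ T.image f with hF
  have hFsub : F ⊆ K ∩ T.image f := le_refl _
  have hFcard : F.card ≤ T.card - 1 := by
    have h1 : F ⊆ (T.image f).erase (f u) := by
      intro x hx
      rw [Finset.mem_erase]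
      refine ⟨?_, (Finset.mem_inter.mp hx).2⟩
      rintro rfl
      exact heK (Finset.mem_inter.mp hx).1
    calc F.card ≤ ((T.image f).erase (f u)).card := Finset.card_le_card h1
      _ = (T.image f).card - 1 := Finset.card_erase_of_mem he
      _ ≤ T.card - 1 := Nat.sub_le_sub_right Finset.card_image_le 1
  have hreach := hKsol F hFsub hFcard
  obtain ⟨w⟩ := hreach
  cases w with
  | @cons _ v _ hadj _ =>
    have hmem : s(none, v) ∈ (↑(K \ F) : Set (Sym2 (Option V))) := hadj.1
    rw [Finset.mem_coe, Finset.mem_sdiff] at hmem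
    obtain ⟨hK, hnF⟩ := hmem
    have : s(none, v) ∈ T.image f := by
      rcases Finset.mem_union.mp (hKsub hK) with h | h
      · exfalso
        obtain ⟨e', _, he'⟩ := Finset.mem_image.mp h
        induction e' with
        | h a b => simp [Sym2.map_pair_eq, Sym2.eq_iff] at he'
      · exact h
    exact hnF (Finset.mem_inter.mpr ⟨hK, this⟩)
end

section
/- Consider the Biclique to Fault-Tolerant Path reduction: given a bipartite graph G = (A ∪ B, E) with |E| ≥ 3d², make all edges of G vulnerable; add vertices s, t, v; add safe edges {v, x} for every x ∈ A and {y, t} for every y ∈ B; add a path of 2d² - 2d - 1 safe edges from s to v; add d² internally disjoint s-t-paths of three vulnerable edges each; set k = d² - 1 and ℓ = 3d² - 1. If G contains a complete bipartite subgraph K_{d,d}, then the constructed Fault-Tolerant Path instance is a yes-instance. -/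
/-- Vertices of the graph built in the Biclique to Fault-Tolerant Path reduction:
`s`, `t`, `v`, a vertex `A x` for each left vertex `x`, a vertex `B y` for each
right vertex `y`, internal vertices `P i` of the safe `s`-`v`-path, and internal
vertices `Q i j` (`j ∈ {0,1}`) of the `d²` three-edge vulnerable `s`-`t`-paths. -/
inductive BV (α β : Type*) where
  | s : BV α β
  | t : BV α β
  | v : BV α β
  | A : α → BV α β
  | B : β → BV α β
  | P : ℕ → BV α β
  | Q : ℕ → ℕ → BV α β
  deriving DecidableEq

/-- The `i`-th vertex of the safe `s`-`v`-path with `2d² - 2d - 1` edges: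
`pvert 0 = s`, `pvert (2d² - 2d - 1) = v`, and internal vertices in between. -/
def pvert (α β : Type*) (d : ℕ) (i : ℕ) : BV α β :=
  if i = 0 then BV.s else if i = 2 * d ^ 2 - 2 * d - 1 then BV.v else BV.P i

lemma pvert_cases (α β : Type*) (d i : ℕ) :
    pvert α β d i = BV.s ∨ pvert α β d i = BV.v ∨ ∃ j, pvert α β d i = BV.P j := by
  unfold pvert
  split
  · exact Or.inl rfl
  · split
    · exact Or.inr (Or.inl rfl)
    · exact Or.inr (Or.inr ⟨i, rfl⟩)

lemma pvert_succ_ne (α β : Type*) (d i : ℕ) (hi : i < 2 * d ^ 2 - 2 * d - 1) :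
    pvert α β d i ≠ pvert α β d (i + 1) := by
  unfold pvert
  split_ifs <;> simp_all

/-- Biclique to Fault-Tolerant Path reduction, forward direction: all edges of the
bipartite graph `E ⊆ α × β` (with `|E| ≥ 3d²`) become vulnerable; safe edges
`{v, A x}` and `{B y, t}` are added, together with a safe `s`-`v`-path of
`2d² - 2d - 1` edges and `d²` internally disjoint `s`-`t`-paths of three vulnerable
edges each; `k = d² - 1` and `ℓ = 3d² - 1`.  If the bipartite graph contains a
`K_{d,d}`, then the constructed Fault-Tolerant Path instance is a yes-instance. -/
theorem stmt_17 {α β : Type*} [Fintype α] [Fintype β] [DecidableEq α] [DecidableEq β]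
    (E : Finset (α × β)) (d : ℕ) (hd : 2 ≤ d) (hE : 3 * d ^ 2 ≤ E.card)
    (hbic : ∃ (X : Finset α) (Y : Finset β), X.card = d ∧ Y.card = d ∧
      ∀ x ∈ X, ∀ y ∈ Y, (x, y) ∈ E) :
    ∃ K : Finset (Sym2 (BV α β)),
      K ⊆ ((Finset.range (2 * d ^ 2 - 2 * d - 1)).image
              (fun i => s(pvert α β d i, pvert α β d (i + 1))) ∪
            Finset.univ.image (fun x : α => s(BV.v, BV.A x)) ∪
            Finset.univ.image (fun y : β => s(BV.B y, BV.t))) ∪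
          (E.image (fun e => s(BV.A e.1, BV.B e.2)) ∪
            (Finset.range (d ^ 2)).biUnion (fun i =>
              {s(BV.s, BV.Q i 0), s(BV.Q i 0, BV.Q i 1), s(BV.Q i 1, BV.t)})) ∧
      K.card ≤ 3 * d ^ 2 - 1 ∧
      ∀ F : Finset (Sym2 (BV α β)),
        F ⊆ K ∩ (E.image (fun e => s(BV.A e.1, BV.B e.2)) ∪
            (Finset.range (d ^ 2)).biUnion (fun i =>
              {s(BV.s, BV.Q i 0), s(BV.Q i 0, BV.Q i 1), s(BV.Q i 1, BV.t)})) →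
        F.card ≤ d ^ 2 - 1 →
          (SimpleGraph.fromEdgeSet (↑(K \ F) : Set (Sym2 (BV α β)))).Reachable
            BV.s BV.t := by
  
  classical
  obtain ⟨X, Y, hX, hY, hXY⟩ := hbic
  set L := 2 * d ^ 2 - 2 * d - 1 with hL
  have hd2 : 4 ≤ d ^ 2 := by nlinarith
  have hdd : 2 * d + 4 ≤ 2 * d ^ 2 := by nlinarith
  have hL3 : 3 ≤ L := by omega
  set Vul : Finset (Sym2 (BV α β)) :=
    E.image (fun e => s(BV.A e.1, BV.B e.2)) ∪
      (Finset.range (d ^ 2)).biUnion (fun i =>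
        {s(BV.s, BV.Q i 0), s(BV.Q i 0, BV.Q i 1), s(BV.Q i 1, BV.t)}) with hVul
  set Pe : Finset (Sym2 (BV α β)) :=
    (Finset.range L).image (fun i => s(pvert α β d i, pvert α β d (i + 1))) with hPe
  set S : Finset (Sym2 (BV α β)) :=
    (X ×ˢ Y).image (fun p => s(BV.A p.1, BV.B p.2)) with hS
  set VX : Finset (Sym2 (BV α β)) := X.image (fun x => s(BV.v, BV.A x)) with hVX
  set YT : Finset (Sym2 (BV α β)) := Y.image (fun y => s(BV.B y, BV.t)) with hYT
  refine ⟨Pe ∪ S ∪ VX ∪ YT, ?_, ?_, ?_⟩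
  · intro e he
    simp only [Finset.mem_union] at he ⊢
    rcases he with ((he | he) | he) | he
    · exact Or.inl (Or.inl (Or.inl he))
    · refine Or.inr ?_
      simp only [hS, Finset.mem_image, Finset.mem_product] at he
      obtain ⟨⟨x, y⟩, ⟨hx, hy⟩, rfl⟩ := he
      exact Finset.mem_union_left _
        (Finset.mem_image.2 ⟨(x, y), hXY x hx y hy, rfl⟩)
    · refine Or.inl (Or.inl (Or.inr ?_))
      simp only [hVX, Finset.mem_image] at he
      obtain ⟨x, _, rfl⟩ := he
      exact Finset.mem_image.2 ⟨x, Finset.mem_univ x, rfl⟩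
    · refine Or.inl (Or.inr ?_)
      simp only [hYT, Finset.mem_image] at he
      obtain ⟨y, _, rfl⟩ := he
      exact Finset.mem_image.2 ⟨y, Finset.mem_univ y, rfl⟩
  · have h1 : Pe.card ≤ L := le_trans Finset.card_image_le (by simp)
    have h2 : S.card ≤ d ^ 2 := le_trans Finset.card_image_le
      (by rw [Finset.card_product, hX, hY, sq])
    have h3 : VX.card ≤ d := le_trans Finset.card_image_le (le_of_eq hX)
    have h4 : YT.card ≤ d := le_trans Finset.card_image_le (le_of_eq hY)
    calc (Pe ∪ S ∪ VX ∪ YT).card ≤ Pe.card + S.card + VX.card + YT.card := by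
          refine le_trans (Finset.card_union_le _ _) ?_
          refine Nat.add_le_add_right (le_trans (Finset.card_union_le _ _) ?_) _
          exact Nat.add_le_add_right (Finset.card_union_le _ _) _
      _ ≤ L + d ^ 2 + d + d := by omega
      _ ≤ 3 * d ^ 2 - 1 := by omega
  · intro F hF hFk
    have hFVul : F ⊆ Vul := fun e he => (Finset.mem_inter.1 (hF he)).2
    -- safe edges are not vulnerable
    have hsafeP : ∀ i, s(pvert α β d i, pvert α β d (i + 1)) ∉ Vul := by
      intro i hmem
      rcases pvert_cases α β d i with h1 | h1 | ⟨j, h1⟩ <;>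
        rcases pvert_cases α β d (i + 1) with h2 | h2 | ⟨j', h2⟩ <;>
          simp [hVul, h1, h2, Sym2.eq_iff, Finset.mem_union, Finset.mem_image,
            Finset.mem_biUnion] at hmem
    have hsafeV : ∀ x : α, s(BV.v, BV.A x) ∉ Vul := by
      intro x hmem
      simp [hVul, Sym2.eq_iff, Finset.mem_union, Finset.mem_image,
        Finset.mem_biUnion] at hmem
    have hsafeT : ∀ y : β, s(BV.B y, BV.t) ∉ Vul := by
      intro y hmem
      simp [hVul, Sym2.eq_iff, Finset.mem_union, Finset.mem_image,
        Finset.mem_biUnion] at hmem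
    set G := SimpleGraph.fromEdgeSet (↑((Pe ∪ S ∪ VX ∪ YT) \ F) : Set (Sym2 (BV α β)))
      with hG
    have hadj : ∀ a b : BV α β, s(a, b) ∈ Pe ∪ S ∪ VX ∪ YT → s(a, b) ∉ F → a ≠ b →
        G.Adj a b := by
      intro a b h1 h2 h3
      rw [hG, SimpleGraph.fromEdgeSet_adj]
      exact ⟨Finset.mem_coe.2 (Finset.mem_sdiff.2 ⟨h1, h2⟩), h3⟩
    -- reach v
    have hreach : ∀ i, i ≤ L → G.Reachable BV.s (pvert α β d i) := by
      intro i
      induction i with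
      | zero =>
        intro _
        rw [show pvert α β d 0 = BV.s from if_pos rfl]
      | succ n ih =>
        intro hn
        have hnL : n < L := by omega
        refine (ih (le_of_lt hnL)).trans (SimpleGraph.Adj.reachable ?_)
        refine hadj _ _ ?_ ?_ (pvert_succ_ne α β d n hnL)
        · exact Finset.mem_union_left _ (Finset.mem_union_left _ (Finset.mem_union_left _
            (Finset.mem_image.2 ⟨n, Finset.mem_range.2 hnL, rfl⟩)))
        · exact fun h => hsafeP n (hFVul h)
    have hsv : G.Reachable BV.s BV.v := by
      have := hreach L le_rfl
      rwa [show pvert α β d L = BV.v by unfold pvert; rw [if_neg (by omega), if_pos rfl]]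
        at this
    -- surviving biclique edge
    have hScard : S.card = d ^ 2 := by
      rw [hS, Finset.card_image_of_injective, Finset.card_product, hX, hY, sq]
      intro p q hpq
      simp only [Sym2.eq_iff] at hpq
      rcases hpq with ⟨h1, h2⟩ | ⟨h1, h2⟩
      · exact Prod.ext (BV.A.inj h1) (BV.B.inj h2)
      · exact absurd h1 (by simp)
    have hnot : ¬ S ⊆ F := by
      intro h
      have := Finset.card_le_card h
      omega
    obtain ⟨e, heS, heF⟩ := Finset.not_subset.1 hnot
    obtain ⟨⟨x, y⟩, hxy, rfl⟩ := Finset.mem_image.1 heS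
    obtain ⟨hx, hy⟩ := Finset.mem_product.1 hxy
    have step1 : G.Adj BV.v (BV.A x) := by
      refine hadj _ _ ?_ (fun h => hsafeV x (hFVul h)) (by simp)
      exact Finset.mem_union_left _ (Finset.mem_union_right _
        (Finset.mem_image.2 ⟨x, hx, rfl⟩))
    have step2 : G.Adj (BV.A x) (BV.B y) := by
      refine hadj _ _ ?_ heF (by simp)
      exact Finset.mem_union_left _ (Finset.mem_union_left _ (Finset.mem_union_right _ heS))
    have step3 : G.Adj (BV.B y) BV.t := by
      refine hadj _ _ ?_ (fun h => hsafeT y (hFVul h)) (by simp)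
      exact Finset.mem_union_right _ (Finset.mem_image.2 ⟨y, hy, rfl⟩)
    exact hsv.trans ((step1.reachable).trans ((step2.reachable).trans step3.reachable))
end
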